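/- arXiv:math/0307137 — 6 statements merged into one kernel-verified Lean document; each statement's English description precedes it below -/
import Mathlib

section
/- Let Σ be a finite alphabet, b ∈ Σ, and let A^b denote the subspace of the free algebra spanned by the empty word and words not ending in x_b. Define reg^b on a word of the form w_b x_b^n (with w_b ∈ A^b) by reg^b(w_b x_b^n) = Σ_{j=0}^n (−1)^j (w_b x_b^{n−j}) ⧢ x_b^{⧢ j}. Then reg^b(w_b x_b^n) lies in A^b. -/
/-- The shuffle product of two words, as a multiset of words. -/
def sh {α : Type*} : List α → List α → Multiset (List α)
  | [], w => {w}
  | u, [] => {u}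
  | a :: u, b :: v => (sh u (b :: v)).map (a :: ·) + (sh (a :: u) v).map (b :: ·)
termination_by u v => u.length + v.length

/-- The shuffle product of two words as an element of the free algebra
(with ℤ coefficients, words as basis). -/
noncomputable def shZ {α : Type*} [DecidableEq α] (u v : List α) : List α →₀ ℤ :=
  (Multiset.toFinsupp (sh u v)).mapRange Int.ofNat rfl

/-- The regularization map: `reg^b(w_b x_b^n) = Σ_{j=0}^n (−1)^j (w_b x_b^{n−j}) ⧢ x_b^j`,
where `x_b^j = x_b^{⧢ j}/j!` is the `j`-th power of the letter `x_b`. -/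
noncomputable def regb {α : Type*} [DecidableEq α] (b : α) (wb : List α) (n : ℕ) :
    List α →₀ ℤ :=
  ∑ j ∈ Finset.range (n + 1),
    ((-1 : ℤ) ^ j) • shZ (wb ++ List.replicate (n - j) b) (List.replicate j b)

/-! Deleting a final letter `b` is a derivation of the shuffle product: the coefficient of `w b`
in `x ⧢ y` is that of `w` in `x' ⧢ y` plus that of `w` in `x ⧢ y'`, where `x'`, `y'` are `x`, `y`
with a final `b` removed (a term being absent when there is none). For the `j`-th summand of
`reg^b(w_b x_b^n)` this writes the coefficient of `w x_b` as `g(n-j-1, j) + g(n-j, j-1)`, with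
`g(m, j)` the coefficient of `w` in `w_b x_b^m ⧢ x_b^j`, and these two families cancel in the
alternating sum. -/

theorem sum_range_neg_one_pow_mul_pascal_eq_zero {R : Type*} [Ring R] (g : ℕ → ℕ → R) (n : ℕ) :
    ∑ j ∈ Finset.range (n + 1), (-1) ^ j *
      ((if n - j = 0 then 0 else g (n - j - 1) j) + (if j = 0 then 0 else g (n - j) (j - 1))) =
      0 := by
  have first : ∑ j ∈ Finset.range (n + 1), (-1) ^ j * (if n - j = 0 then 0 else g (n - j - 1) j) =
      ∑ j ∈ Finset.range n, (-1) ^ j * g (n - (j + 1)) j := by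
    rw [Finset.sum_range_succ, Nat.sub_self, if_pos rfl, mul_zero, add_zero]
    refine Finset.sum_congr rfl fun j hj => ?_
    rw [if_neg (by rw [Finset.mem_range] at hj; omega), Nat.sub_sub]
  have second : ∑ j ∈ Finset.range (n + 1), (-1) ^ j * (if j = 0 then 0 else g (n - j) (j - 1)) =
      -∑ j ∈ Finset.range n, (-1) ^ j * g (n - (j + 1)) j := by
    rw [Finset.sum_range_succ', if_pos rfl, mul_zero, add_zero, ← Finset.sum_neg_distrib]
    refine Finset.sum_congr rfl fun j _ => ?_
    rw [if_neg j.succ_ne_zero, Nat.add_sub_cancel, pow_succ, mul_neg_one, neg_mul]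
  simp only [mul_add, Finset.sum_add_distrib, first, second, add_neg_cancel]

section

variable {α : Type*}

@[simp] theorem sh_nil_left (v : List α) : sh [] v = {v} := sh.eq_1 v

@[simp] theorem sh_nil_right (u : List α) : sh u [] = {u} := by
  cases u <;> simp [sh]

theorem sh_concat_concat (u v : List α) (a c : α) :
    sh (u ++ [a]) (v ++ [c]) =
      (sh u (v ++ [c])).map (· ++ [a]) + (sh (u ++ [a]) v).map (· ++ [c]) := by
  induction u generalizing v with
  | nil =>
    induction v with
    | nil => simpa [sh] using Multiset.pair_comm _ _
    | cons d v ih =>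
      rw [List.nil_append] at ih ⊢
      rw [List.cons_append, sh.eq_3, ← List.cons_append, ih]
      simp only [sh_nil_left, List.cons_append, sh.eq_3, Multiset.map_add, Multiset.map_map,
        Function.comp_def, Multiset.map_singleton]
      exact Multiset.cons_swap _ _ _
  | cons e u ihu =>
    induction v with
    | nil =>
      have := ihu []
      rw [List.nil_append] at this ⊢
      rw [List.cons_append, sh.eq_3, this]
      simp only [sh_nil_right, Multiset.map_singleton, List.append_assoc, List.cons_append,
        List.nil_append, Multiset.map_add, Multiset.map_map, Function.comp_apply, sh]
      exact add_right_comm _ _ _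
    | cons d v ihv =>
      rw [List.cons_append, List.cons_append, sh.eq_3, ← List.cons_append (a := d), ihu,
        ← List.cons_append (a := e), ihv]
      simp only [List.cons_append, sh.eq_3, Multiset.map_add, Multiset.map_map, Function.comp_def]
      abel

variable [DecidableEq α]

theorem count_concat_map_concat (s : Multiset (List α)) (w : List α) (a b : α) :
    (s.map (· ++ [a])).count (w ++ [b]) = if a = b then s.count w else 0 := by
  split_ifs with hab
  · subst hab
    exact Multiset.count_map_eq_count' _ _ (List.append_left_injective [a]) w
  · simp [hab]

theorem count_concat_sh (x y w : List α) (b : α) :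
    (sh x y).count (w ++ [b]) =
      (if x.getLast? = some b then (sh x.dropLast y).count w else 0) +
        (if y.getLast? = some b then (sh x y.dropLast).count w else 0) := by
  rcases x.eq_nil_or_concat' with rfl | ⟨x, a, rfl⟩ <;>
    rcases y.eq_nil_or_concat' with rfl | ⟨y, c, rfl⟩
  · simp
  · simpa using count_concat_map_concat {y} w c b
  · simpa using count_concat_map_concat {x} w a b
  · simp [sh_concat_concat, count_concat_map_concat]

theorem count_concat_sh_append_replicate (b : α) {u : List α} (hu : u.getLast? ≠ some b)
    (w : List α) (m j : ℕ) :
    (sh (u ++ .replicate m b) (.replicate j b)).count (w ++ [b]) =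
      (if m = 0 then 0 else (sh (u ++ .replicate (m - 1) b) (.replicate j b)).count w) +
        (if j = 0 then 0 else (sh (u ++ .replicate m b) (.replicate (j - 1) b)).count w) := by
  rw [count_concat_sh, List.dropLast_replicate]
  congr 1
  · rcases Nat.eq_zero_or_pos m with rfl | hm
    · simp [hu]
    · rw [List.dropLast_append_of_ne_nil (by simpa using hm.ne'), List.dropLast_replicate]
      simp [List.getLast?_append, List.getLast?_replicate, hm.ne']
  · simp [List.getLast?_replicate]

theorem shZ_apply (u v x : List α) : shZ u v x = ((sh u v).count x : ℤ) := by
  simp [shZ, Multiset.toFinsupp_apply]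

theorem regb_apply_concat_self (b : α) {u : List α} (hu : u.getLast? ≠ some b) (n : ℕ)
    (w : List α) : regb b u n (w ++ [b]) = 0 := by
  simp only [regb, Finsupp.finsetSum_apply, Finsupp.smul_apply, shZ_apply, smul_eq_mul,
    count_concat_sh_append_replicate b hu]
  push_cast
  exact sum_range_neg_one_pow_mul_pascal_eq_zero
    (fun m j => ((sh (u ++ .replicate m b) (.replicate j b)).count w : ℤ)) n

end

/-- If the word `w_b` does not end in the letter `b`, then `reg^b(w_b x_b^n)` lies in
`A^b`, the span of the empty word and the words not ending in `x_b`. -/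
theorem regb_mem {α : Type*} [DecidableEq α] (b : α) (wb : List α) (n : ℕ)
    (hwb : wb.getLast? ≠ some b) :
    ∀ u ∈ (regb b wb n).support, u = [] ∨ u.getLast? ≠ some b := by
  intro u hu
  rcases u.eq_nil_or_concat' with rfl | ⟨w, a, rfl⟩
  · exact Or.inl rfl
  refine Or.inr fun hlast => ?_
  obtain rfl : a = b := by simpa using hlast
  exact Finsupp.mem_support_iff.1 hu (regb_apply_concat_self a hwb n w)
end

section
/- The duality identity −Σ_{m₁>m₂≥1} (−1)^{m₂}/(m₁² m₂) = Σ_{m₁>m₂≥1} (1/2)^{m₁−m₂}/(m₁ m₂²) holds, where both double series converge absolutely. -/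
/-!
Put `n = b + 1` on the left: summing over `m` first leaves `∑_b (-1)^b t(b+1)/(b+1)`
(up to sign), where `t(n) = ∑_{k>n} 1/k²`. Euler's transformation rewrites this alternating
series as `∑_s 2^{-s-1} ∑_k C(s,k) (-1)^k t(k+1)/(k+1)`, and since `t(k+1) = ζ(2) - H₂(k+1)`,
alternating binomial sums evaluate the inner sum to `ζ(2)/(s+1) - H_{s+1}/(s+1)²`. On the right,
fixing the gap `m - n = s + 1` and summing over `n` by partial fractions gives the same `s`-th
term.
-/

open Finset Filter Topology

theorem sum_range_neg_one_pow_mul_choose_succ {R : Type*} [CommRing R] (n : ℕ) :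
    ∑ k ∈ range (n + 1), (-1 : R) ^ k * (n + 1).choose (k + 1) = 1 := by
  have h := Int.alternating_sum_range_choose_of_ne n.succ_ne_zero
  rw [sum_range_succ'] at h
  simp only [pow_succ, mul_neg, mul_one, neg_mul, sum_neg_distrib, pow_zero,
    Nat.choose_zero_right, Nat.cast_one, neg_add_eq_zero] at h
  exact_mod_cast congrArg (Int.cast : ℤ → R) h

theorem sum_range_neg_one_pow_mul_choose_mul_sum_range {R : Type*} [CommRing R]
    (c : ℕ → R) (n : ℕ) :
    ∑ j ∈ range (n + 2), (-1 : R) ^ j * (n + 1).choose j * ∑ i ∈ range j, c i =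
      -∑ k ∈ range (n + 1), (-1 : R) ^ k * n.choose k * c k := by
  have shifted :
      ∑ k ∈ range (n + 1), (-1 : R) ^ (k + 1) * n.choose (k + 1) *
          ∑ i ∈ range (k + 1), c i =
        ∑ k ∈ range (n + 1), (-1 : R) ^ k * n.choose k * ∑ i ∈ range k, c i := by
    have h := sum_range_succ' (fun j => (-1 : R) ^ j * n.choose j * ∑ i ∈ range j, c i) (n + 1)
    rw [sum_range_succ, Nat.choose_succ_self] at h
    simpa using h.symm
  have pascal : ∀ k ∈ range (n + 1),
      (-1 : R) ^ (k + 1) * (n + 1).choose (k + 1) * ∑ i ∈ range (k + 1), c i =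
        -((-1 : R) ^ k * n.choose k * ∑ i ∈ range k, c i) - (-1 : R) ^ k * n.choose k * c k +
          (-1 : R) ^ (k + 1) * n.choose (k + 1) * ∑ i ∈ range (k + 1), c i := by
    intro k _
    rw [Nat.choose_succ_succ', sum_range_succ]
    push_cast
    ring
  rw [sum_range_succ', sum_range_zero, mul_zero, add_zero, sum_congr rfl pascal,
    sum_add_distrib, sum_sub_distrib, sum_neg_distrib, shifted]
  ring

section

variable {K : Type*} [Field K] [CharZero K]

theorem cast_choose_eq_choose_succ_mul_div (n k : ℕ) :
    (n.choose k : K) = (n + 1).choose (k + 1) * (k + 1) / (n + 1) := by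
  rw [eq_div_iff (Nat.cast_add_one_ne_zero n)]
  exact_mod_cast (mul_comm _ _).trans (Nat.add_one_mul_choose_eq n k)

theorem sum_range_neg_one_pow_mul_choose_div_succ (n : ℕ) :
    ∑ k ∈ range (n + 1), (-1 : K) ^ k * n.choose k / (k + 1) = 1 / (n + 1) := by
  have hn := Nat.cast_add_one_ne_zero (R := K) n
  calc ∑ k ∈ range (n + 1), (-1 : K) ^ k * n.choose k / (k + 1)
      = (∑ k ∈ range (n + 1), (-1 : K) ^ k * (n + 1).choose (k + 1)) / (n + 1) := by
        rw [sum_div]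
        refine sum_congr rfl fun k _ => ?_
        have hk := Nat.cast_add_one_ne_zero (R := K) k
        rw [cast_choose_eq_choose_succ_mul_div n k]
        field_simp
    _ = 1 / (n + 1) := by rw [sum_range_neg_one_pow_mul_choose_succ]

theorem sum_range_neg_one_pow_mul_choose_succ_div_succ (n : ℕ) :
    ∑ k ∈ range n, (-1 : K) ^ k * n.choose (k + 1) / (k + 1) = harmonic n := by
  induction n with
  | zero => simp
  | succ n ih =>
    simp_rw [Nat.choose_succ_succ', Nat.cast_add, mul_add, add_div, sum_add_distrib,
      sum_range_neg_one_pow_mul_choose_div_succ, sum_range_succ _ n, Nat.choose_succ_self, ih,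
      harmonic_succ]
    push_cast
    ring

theorem sum_range_neg_one_pow_mul_choose_succ_mul_sum_inv_sq (n : ℕ) :
    ∑ k ∈ range (n + 1), (-1 : K) ^ k * (n + 1).choose (k + 1) *
        ∑ i ∈ range (k + 1), 1 / ((i : K) + 1) ^ 2 = harmonic (n + 1) / (n + 1) := by
  have hn := Nat.cast_add_one_ne_zero (R := K) n
  have abel := sum_range_neg_one_pow_mul_choose_mul_sum_range (fun i => 1 / ((i : K) + 1) ^ 2) n
  rw [sum_range_succ', sum_range_zero, mul_zero, add_zero] at abel
  simp_rw [pow_succ (-1 : K), mul_neg_one, neg_mul, sum_neg_distrib, neg_inj] at abel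
  rw [abel, ← sum_range_neg_one_pow_mul_choose_succ_div_succ, sum_div]
  refine sum_congr rfl fun k _ => ?_
  have hk := Nat.cast_add_one_ne_zero (R := K) k
  rw [cast_choose_eq_choose_succ_mul_div n k]
  field_simp

theorem sum_range_neg_one_pow_mul_choose_mul_sub_sum_inv_sq_div_succ (z : K) (n : ℕ) :
    ∑ k ∈ range (n + 1), (-1 : K) ^ k * n.choose k *
        (z - ∑ i ∈ range (k + 1), 1 / ((i : K) + 1) ^ 2) / (k + 1) =
      z / (n + 1) - harmonic (n + 1) / (n + 1) ^ 2 := by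
  have hn := Nat.cast_add_one_ne_zero (R := K) n
  have split : ∀ k ∈ range (n + 1), (-1 : K) ^ k * n.choose k *
        (z - ∑ i ∈ range (k + 1), 1 / ((i : K) + 1) ^ 2) / (k + 1) =
      z * ((-1 : K) ^ k * n.choose k / (k + 1)) - (-1 : K) ^ k * (n + 1).choose (k + 1) *
        (∑ i ∈ range (k + 1), 1 / ((i : K) + 1) ^ 2) / (n + 1) := by
    intro k _
    have hk := Nat.cast_add_one_ne_zero (R := K) k
    rw [cast_choose_eq_choose_succ_mul_div n k]
    field_simp
  rw [sum_congr rfl split, sum_sub_distrib, ← mul_sum, ← sum_div,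
    sum_range_neg_one_pow_mul_choose_div_succ, sum_range_neg_one_pow_mul_choose_succ_mul_sum_inv_sq]
  field_simp

end

theorem hasSum_sub_add_of_antitone {f : ℕ → ℝ} (hf : Antitone f)
    (hlim : Tendsto f atTop (𝓝 0)) (n : ℕ) :
    HasSum (fun k => f k - f (k + n)) (∑ i ∈ range n, f i) := by
  rw [hasSum_iff_tendsto_nat_of_nonneg fun k => sub_nonneg.2 (hf (Nat.le_add_right k n))]
  have partial_sum (N : ℕ) : ∑ k ∈ range N, (f k - f (k + n)) =
      ∑ i ∈ range n, f i - ∑ i ∈ range n, f (N + i) := by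
    have h₁ := sum_range_add f N n
    have h₂ := sum_range_add f n N
    rw [add_comm n N] at h₂
    simp only [add_comm n] at h₂
    rw [sum_sub_distrib]
    linarith
  simp_rw [partial_sum]
  have hvanish : Tendsto (fun N => ∑ i ∈ range n, f (N + i)) atTop (𝓝 0) := by
    simpa using tendsto_finsetSum (range n) fun i _ => hlim.comp (tendsto_add_atTop_nat i)
  simpa using tendsto_const_nhds.sub hvanish

theorem tendsto_one_div_add_atTop_nhds_zero (c : ℝ) :
    Tendsto (fun k : ℕ => 1 / ((k : ℝ) + c)) atTop (𝓝 0) := by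
  simpa only [one_div, Pi.inv_def] using
    (tendsto_atTop_add_const_right atTop c tendsto_natCast_atTop_atTop).inv_tendsto_atTop

theorem antitone_one_div_add {c : ℝ} (hc : 0 < c) : Antitone fun k : ℕ => 1 / ((k : ℝ) + c) :=
  fun _ _ hab => one_div_le_one_div_of_le (by positivity) (by gcongr)

theorem hasSum_harmonic (n : ℕ) :
    HasSum (fun k : ℕ => 1 / ((k : ℝ) + 1) - 1 / ((k : ℝ) + n + 1)) (harmonic n) := by
  have h := hasSum_sub_add_of_antitone (antitone_one_div_add one_pos)
    (tendsto_one_div_add_atTop_nhds_zero 1) n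
  have harmonic_eq : (harmonic n : ℝ) = ∑ i ∈ range n, 1 / ((i : ℝ) + 1) := by
    simp [harmonic]
  simpa only [harmonic_eq, Nat.cast_add, add_right_comm _ (n : ℝ)] using h

noncomputable def zetaTwoTail (n : ℕ) : ℝ := ∑' k : ℕ, 1 / ((k : ℝ) + n + 1) ^ 2

theorem hasSum_zetaTwoTail (n : ℕ) :
    HasSum (fun k : ℕ => 1 / ((k : ℝ) + n + 1) ^ 2) (zetaTwoTail n) := by
  have h := (summable_nat_add_iff (n + 1)).2 (Real.summable_one_div_nat_pow.2 one_lt_two)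
  refine (h.congr fun k => ?_).hasSum
  push_cast
  ring_nf

theorem zetaTwoTail_nonneg (n : ℕ) : 0 ≤ zetaTwoTail n :=
  tsum_nonneg fun _ => by positivity

theorem zetaTwoTail_eq_sub (n : ℕ) :
    zetaTwoTail n = zetaTwoTail 0 - ∑ i ∈ range n, 1 / ((i : ℝ) + 1) ^ 2 := by
  have h := (hasSum_zetaTwoTail 0).summable.sum_add_tsum_nat_add n
  simp only [CharP.cast_eq_zero, add_zero, Nat.cast_add] at h
  simp only [zetaTwoTail, CharP.cast_eq_zero, add_zero]
  linarith

theorem zetaTwoTail_succ_le (n : ℕ) : zetaTwoTail (n + 1) ≤ 1 / (n + 1) := by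
  have telescope := hasSum_sub_add_of_antitone
    (antitone_one_div_add (by positivity : (0 : ℝ) < n + 1))
    (tendsto_one_div_add_atTop_nhds_zero _) 1
  rw [sum_range_one, Nat.cast_zero, zero_add] at telescope
  refine hasSum_le (fun k => ?_) (hasSum_zetaTwoTail (n + 1)) telescope
  have hk : (0 : ℝ) < k + n + 1 := by positivity
  rw [div_sub_div _ _ (by positivity) (by positivity),
    div_le_div_iff₀ (by positivity) (by positivity)]
  push_cast
  nlinarith

theorem hasSum_one_div_add_mul_sq (a : ℕ) :
    HasSum (fun k : ℕ => 1 / (((k : ℝ) + a + 2) * ((k : ℝ) + 1) ^ 2))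
      (zetaTwoTail 0 / (a + 1) - harmonic (a + 1) / (a + 1) ^ 2) := by
  have h := ((hasSum_zetaTwoTail 0).div_const ((a : ℝ) + 1)).sub
    ((hasSum_harmonic (a + 1)).div_const (((a : ℝ) + 1) ^ 2))
  push_cast at h
  refine h.congr_fun fun k => ?_
  field_simp
  ring

theorem summable_abs_of_hasSum_abs_rows {α β : Type*} {f : α × β → ℝ} {R : α → ℝ}
    (hR : ∀ a, HasSum (fun b => |f (a, b)|) (R a)) (hRs : Summable R) :
    Summable fun q => |f q| :=
  (summable_prod_of_nonneg fun _ => abs_nonneg _).2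
    ⟨fun a => (hR a).summable, by simpa only [(hR _).tsum_eq] using hRs⟩

theorem hasSum_choose_mul_half_pow (b : ℕ) :
    HasSum (fun c : ℕ => ((b + c).choose b : ℝ) * (1 / 2) ^ (b + c + 1)) 1 := by
  have h := (hasSum_choose_mul_geometric_of_norm_lt_one (𝕜 := ℝ) b
    (r := 1 / 2) (by norm_num)).mul_right ((1 / 2) ^ (b + 1))
  norm_num at h
  refine h.congr_fun fun c => ?_
  rw [add_comm b c, pow_add, pow_add]
  ring

theorem hasSum_euler_transform {y : ℕ → ℝ} (hy : Summable y) :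
    HasSum (fun s => (1 / 2 : ℝ) ^ (s + 1) * ∑ k ∈ range (s + 1), (s.choose k : ℝ) * y k)
      (∑' k, y k) := by
  -- spread `y b` along the row `c ↦ C(b+c, b) / 2^(b+c+1)` of total weight one,
  -- then regroup the double series along the antidiagonals `b + c = s`
  set Φ : ℕ × ℕ → ℝ := fun q =>
    ((q.1 + q.2).choose q.1 : ℝ) * (1 / 2) ^ (q.1 + q.2 + 1) * y q.1
  have rows (b : ℕ) : HasSum (fun c => Φ (b, c)) (y b) := by
    simpa only [one_mul] using (hasSum_choose_mul_half_pow b).mul_right (y b)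
  have abs_rows (b : ℕ) : HasSum (fun c => |Φ (b, c)|) |y b| := by
    simpa [Φ, abs_mul] using (hasSum_choose_mul_half_pow b).mul_right |y b|
  have hΦ : Summable Φ := (summable_abs_of_hasSum_abs_rows abs_rows hy.abs).of_abs
  have total : HasSum Φ (∑' k, y k) := by
    convert hΦ.hasSum
    exact (hΦ.hasSum.prod_fiberwise rows).tsum_eq
  have diagonals := (HasAntidiagonal.sigmaAntidiagonalEquivProd.hasSum_iff.2 total).sigma
    fun s => hasSum_fintype _
  convert diagonals using 2 with s
  simp only [Function.comp_apply, HasAntidiagonal.sigmaAntidiagonalEquivProd_apply]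
  rw [sum_coe_sort (antidiagonal s) Φ, Nat.sum_antidiagonal_eq_sum_range_succ_mk, mul_sum]
  refine sum_congr rfl fun k hk => ?_
  simp only [Φ, Nat.add_sub_of_le (Nat.lt_succ_iff.1 (mem_range.1 hk))]
  ring

theorem summable_zetaTwoTail_succ_div :
    Summable fun b : ℕ => zetaTwoTail (b + 1) / (b + 1) := by
  have hsq : Summable fun b : ℕ => 1 / ((b : ℝ) + 1) ^ 2 := by
    simpa using (hasSum_zetaTwoTail 0).summable
  refine hsq.of_nonneg_of_le (fun b => by positivity [zetaTwoTail_nonneg (b + 1)]) fun b => ?_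
  calc zetaTwoTail (b + 1) / (b + 1) ≤ 1 / ((b : ℝ) + 1) / (b + 1) := by
        gcongr
        exact zetaTwoTail_succ_le b
    _ = 1 / ((b : ℝ) + 1) ^ 2 := by rw [div_div, sq]

theorem hasSum_euler_transform_alternating_zetaTwoTail :
    HasSum (fun s : ℕ => (1 / 2 : ℝ) ^ (s + 1) *
        (zetaTwoTail 0 / (s + 1) - harmonic (s + 1) / (s + 1) ^ 2))
      (∑' b : ℕ, (-1) ^ b * (zetaTwoTail (b + 1) / (b + 1))) := by
  have hy : Summable fun b : ℕ => (-1 : ℝ) ^ b * (zetaTwoTail (b + 1) / (b + 1)) :=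
    summable_zetaTwoTail_succ_div.of_norm_bounded fun b => by
      simp [abs_of_nonneg (zetaTwoTail_nonneg _),
        abs_of_nonneg (by positivity : (0 : ℝ) ≤ b + 1)]
  refine (hasSum_euler_transform hy).congr_fun fun s => ?_
  rw [← sum_range_neg_one_pow_mul_choose_mul_sub_sum_inv_sq_div_succ]
  congr 1
  refine sum_congr rfl fun k _ => ?_
  rw [zetaTwoTail_eq_sub (k + 1)]
  ring

theorem hasSum_alternating_double :
    HasSum (fun q : ℕ × ℕ =>
        (-1 : ℝ) ^ (q.1 + 1) / (((q.1 : ℝ) + q.2 + 2) ^ 2 * (q.1 + 1)))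
      (-∑' b : ℕ, (-1) ^ b * (zetaTwoTail (b + 1) / (b + 1))) := by
  have abs_rows (b : ℕ) : HasSum (fun c : ℕ => 1 / (((b : ℝ) + c + 2) ^ 2 * (b + 1)))
      (zetaTwoTail (b + 1) / (b + 1)) := by
    refine ((hasSum_zetaTwoTail (b + 1)).div_const ((b : ℝ) + 1)).congr_fun fun c => ?_
    push_cast
    rw [div_div]
    ring_nf
  have rows (b : ℕ) :
      HasSum (fun c : ℕ => (-1 : ℝ) ^ (b + 1) / (((b : ℝ) + c + 2) ^ 2 * (b + 1)))
        ((-1) ^ (b + 1) * (zetaTwoTail (b + 1) / (b + 1))) :=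
    ((abs_rows b).mul_left ((-1) ^ (b + 1))).congr_fun fun c => by ring
  have summable : Summable fun q : ℕ × ℕ =>
      (-1 : ℝ) ^ (q.1 + 1) / (((q.1 : ℝ) + q.2 + 2) ^ 2 * (q.1 + 1)) := by
    refine (summable_abs_of_hasSum_abs_rows (fun b => ?_) summable_zetaTwoTail_succ_div).of_abs
    refine (abs_rows b).congr_fun fun c => ?_
    rw [abs_div, abs_pow, abs_neg, abs_one, one_pow, abs_of_pos (by positivity)]
  convert summable.hasSum
  rw [← (summable.hasSum.prod_fiberwise rows).tsum_eq, ← tsum_neg]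
  exact tsum_congr fun b => by ring

theorem hasSum_geometric_double :
    HasSum (fun q : ℕ × ℕ =>
        (1 / 2 : ℝ) ^ (q.1 + 1) / (((q.1 : ℝ) + q.2 + 2) * ((q.2 : ℝ) + 1) ^ 2))
      (∑' a : ℕ, (1 / 2 : ℝ) ^ (a + 1) *
        (zetaTwoTail 0 / (a + 1) - harmonic (a + 1) / (a + 1) ^ 2)) := by
  have rows (a : ℕ) : HasSum
      (fun b : ℕ => (1 / 2 : ℝ) ^ (a + 1) / (((a : ℝ) + b + 2) * ((b : ℝ) + 1) ^ 2))
      ((1 / 2 : ℝ) ^ (a + 1) * (zetaTwoTail 0 / (a + 1) - harmonic (a + 1) / (a + 1) ^ 2)) :=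
    ((hasSum_one_div_add_mul_sq a).mul_left _).congr_fun fun b => by ring
  have row_nonneg (a : ℕ) :
      0 ≤ zetaTwoTail 0 / (a + 1) - harmonic (a + 1) / ((a : ℝ) + 1) ^ 2 :=
    (hasSum_one_div_add_mul_sq a).nonneg fun _ => by positivity
  have row_le (a : ℕ) : zetaTwoTail 0 / (a + 1) - harmonic (a + 1) / ((a : ℝ) + 1) ^ 2 ≤
      zetaTwoTail 0 := by
    refine hasSum_le (fun k => ?_) (hasSum_one_div_add_mul_sq a) (hasSum_zetaTwoTail 0)
    rw [Nat.cast_zero, add_zero]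
    exact one_div_le_one_div_of_le (by positivity) (by nlinarith [sq_nonneg ((k : ℝ) + 1)])
  have row_sums : Summable fun a : ℕ => (1 / 2 : ℝ) ^ (a + 1) *
      (zetaTwoTail 0 / (a + 1) - harmonic (a + 1) / (a + 1) ^ 2) := by
    refine (summable_geometric_two.mul_right (zetaTwoTail 0)).of_nonneg_of_le
      (fun a => mul_nonneg (by positivity) (row_nonneg a)) fun a => ?_
    exact mul_le_mul (pow_le_pow_of_le_one (by norm_num) (by norm_num) a.le_succ) (row_le a)
      (row_nonneg a) (by positivity)
  have summable : Summable fun q : ℕ × ℕ =>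
      (1 / 2 : ℝ) ^ (q.1 + 1) / (((q.1 : ℝ) + q.2 + 2) * ((q.2 : ℝ) + 1) ^ 2) :=
    (summable_abs_of_hasSum_abs_rows (fun a => (rows a).congr_fun fun b =>
      abs_of_nonneg (by positivity)) row_sums).of_abs
  convert summable.hasSum
  exact (summable.hasSum.prod_fiberwise rows).tsum_eq

def natProdEquivLtPos : ℕ × ℕ ≃ {p : ℕ × ℕ // p.2 < p.1 ∧ 0 < p.2} where
  toFun q := ⟨(q.1 + q.2 + 2, q.1 + 1), by dsimp only; omega⟩
  invFun p := (p.1.2 - 1, p.1.1 - p.1.2 - 1)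
  left_inv q := by ext <;> dsimp only <;> omega
  right_inv p := by
    obtain ⟨⟨m, n⟩, hlt, hpos⟩ := p
    ext <;> dsimp only at hlt hpos ⊢ <;> omega

theorem hasSum_alternating_lt_pos :
    HasSum (fun p : {p : ℕ × ℕ // p.2 < p.1 ∧ 0 < p.2} =>
        (-1 : ℝ) ^ p.1.2 / ((p.1.1 : ℝ) ^ 2 * (p.1.2 : ℝ)))
      (-∑' b : ℕ, (-1) ^ b * (zetaTwoTail (b + 1) / (b + 1))) :=
  natProdEquivLtPos.hasSum_iff.1 <| hasSum_alternating_double.congr_fun fun q => by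
    simp only [Function.comp_apply, natProdEquivLtPos, Equiv.coe_fn_mk]
    push_cast
    ring

theorem hasSum_geometric_lt_pos :
    HasSum (fun p : {p : ℕ × ℕ // p.2 < p.1 ∧ 0 < p.2} =>
        (1 / 2 : ℝ) ^ (p.1.1 - p.1.2) / ((p.1.1 : ℝ) * (p.1.2 : ℝ) ^ 2))
      (∑' a : ℕ, (1 / 2 : ℝ) ^ (a + 1) *
        (zetaTwoTail 0 / (a + 1) - harmonic (a + 1) / (a + 1) ^ 2)) :=
  ((Equiv.prodComm ℕ ℕ).trans natProdEquivLtPos).hasSum_iff.1 <|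
    hasSum_geometric_double.congr_fun fun q => by
      simp only [Function.comp_apply, Equiv.trans_apply, Equiv.prodComm_apply, Prod.fst_swap,
        Prod.snd_swap, natProdEquivLtPos, Equiv.coe_fn_mk]
      rw [show q.2 + q.1 + 2 - (q.2 + 1) = q.1 + 1 by omega]
      push_cast
      ring

/-- The weight-3 duality identity
`−Σ_{m₁>m₂≥1} (−1)^{m₂}/(m₁² m₂) = Σ_{m₁>m₂≥1} (1/2)^{m₁−m₂}/(m₁ m₂²)`,
both double series converging absolutely. -/
theorem weight_three_duality :
    (Summable fun p : {p : ℕ × ℕ // p.2 < p.1 ∧ 0 < p.2} =>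
        |((-1 : ℝ)) ^ (p.1.2) / ((p.1.1 : ℝ) ^ 2 * (p.1.2 : ℝ))|) ∧
      (Summable fun p : {p : ℕ × ℕ // p.2 < p.1 ∧ 0 < p.2} =>
        |(1 / 2 : ℝ) ^ (p.1.1 - p.1.2) / ((p.1.1 : ℝ) * (p.1.2 : ℝ) ^ 2)|) ∧
      (-(∑' p : {p : ℕ × ℕ // p.2 < p.1 ∧ 0 < p.2},
            ((-1 : ℝ)) ^ (p.1.2) / ((p.1.1 : ℝ) ^ 2 * (p.1.2 : ℝ))) =
          ∑' p : {p : ℕ × ℕ // p.2 < p.1 ∧ 0 < p.2},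
            (1 / 2 : ℝ) ^ (p.1.1 - p.1.2) / ((p.1.1 : ℝ) * (p.1.2 : ℝ) ^ 2)) := by
  refine ⟨hasSum_alternating_lt_pos.summable.abs, hasSum_geometric_lt_pos.summable.abs, ?_⟩
  rw [hasSum_alternating_lt_pos.tsum_eq, hasSum_geometric_lt_pos.tsum_eq, neg_neg,
    hasSum_euler_transform_alternating_zetaTwoTail.tsum_eq]
end

section
/- The simplest case of the MZV duality formula: ζ(3) = ζ(2,1), i.e., Σ_{m≥1} 1/m³ = Σ_{m₁>m₂≥1} 1/(m₁² m₂). -/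
open Filter Finset
open scoped ENNReal NNReal

private noncomputable def Hh (t : ℕ) : ℝ := ∑ i ∈ Finset.range t, 1 / ((i : ℝ) + 1)

private lemma Hh_nonneg (t : ℕ) : 0 ≤ Hh t :=
  Finset.sum_nonneg fun i _ => by positivity


private lemma sum_d (n : ℕ) :
    ∑ i ∈ Finset.range n, (1 / ((i : ℝ) + 1) - 1 / ((i : ℝ) + 2)) = 1 - 1 / ((n : ℝ) + 1) := by
  have h : ∀ i ∈ Finset.range n, (1 / ((i : ℝ) + 1) - 1 / ((i : ℝ) + 2))
      = (fun j : ℕ => 1 / ((j : ℝ) + 1)) i - (fun j : ℕ => 1 / ((j : ℝ) + 1)) (i + 1) := by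
    intro i _
    push_cast
    ring_nf
  rw [Finset.sum_congr rfl h, Finset.sum_range_sub']
  norm_num

private lemma hasSum_d :
    HasSum (fun n : ℕ => 1 / ((n : ℝ) + 1) - 1 / ((n : ℝ) + 2)) 1 := by
  rw [hasSum_iff_tendsto_nat_of_nonneg]
  · simp only [sum_d]
    have h2 : Filter.Tendsto (fun n : ℕ => 1 - 1 / ((n : ℝ) + 1)) atTop (nhds (1 - 0)) :=
      tendsto_const_nhds.sub tendsto_one_div_add_atTop_nhds_zero_nat
    simpa using h2
  · intro i
    have h1 : (0:ℝ) < (i : ℝ) + 1 := by positivity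
    have : 1 / ((i : ℝ) + 2) ≤ 1 / ((i : ℝ) + 1) := by
      apply one_div_le_one_div_of_le h1; linarith
    linarith

private lemma hasSum_d_shift (i : ℕ) :
    HasSum (fun n : ℕ => 1 / (((n + i : ℕ) : ℝ) + 1) - 1 / (((n + i : ℕ) : ℝ) + 2))
      (1 / ((i : ℝ) + 1)) := by
  have : HasSum (fun n : ℕ =>
      (fun t : ℕ => 1 / ((t : ℝ) + 1) - 1 / ((t : ℝ) + 2)) (n + i)) (1 / ((i : ℝ) + 1)) := by
    rw [hasSum_nat_add_iff (f := fun t : ℕ => 1 / ((t : ℝ) + 1) - 1 / ((t : ℝ) + 2)) i]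
    rw [sum_d]
    have h : 1 / ((i : ℝ) + 1) + (1 - 1 / ((i : ℝ) + 1)) = 1 := by ring
    rw [h]
    exact hasSum_d
  exact this

private lemma hasSum_inner (m : ℕ) :
    HasSum (fun n : ℕ => 1 / ((n : ℝ) + 1) - 1 / ((n : ℝ) + (m : ℝ) + 2)) (Hh (m + 1)) := by
  have h := hasSum_sum (s := Finset.range (m + 1))
    (f := fun (i : ℕ) (n : ℕ) => 1 / (((n + i : ℕ) : ℝ) + 1) - 1 / (((n + i : ℕ) : ℝ) + 2))
    (a := fun i => 1 / ((i : ℝ) + 1)) (fun i _ => hasSum_d_shift i)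
  have hval : ∑ i ∈ Finset.range (m + 1), 1 / ((i : ℝ) + 1) = Hh (m + 1) := rfl
  rw [hval] at h
  have hfun : ∀ n : ℕ,
      ∑ i ∈ Finset.range (m + 1), (1 / (((n + i : ℕ) : ℝ) + 1) - 1 / (((n + i : ℕ) : ℝ) + 2))
        = 1 / ((n : ℝ) + 1) - 1 / ((n : ℝ) + (m : ℝ) + 2) := by
    intro n
    have h2 := Finset.sum_range_sub' (fun i : ℕ => 1 / ((n : ℝ) + (i : ℝ) + 1)) (m + 1)
    have h3 : ∀ i ∈ Finset.range (m + 1),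
        (1 / (((n + i : ℕ) : ℝ) + 1) - 1 / (((n + i : ℕ) : ℝ) + 2))
          = (fun j : ℕ => 1 / ((n : ℝ) + (j : ℝ) + 1)) i
            - (fun j : ℕ => 1 / ((n : ℝ) + (j : ℝ) + 1)) (i + 1) := by
      intro i _
      push_cast
      ring_nf
    rw [Finset.sum_congr rfl h3, Finset.sum_range_sub']
    push_cast
    ring_nf
  simp only [hfun] at h
  exact h

private lemma hasSum_term (m : ℕ) :
    HasSum (fun n : ℕ => 1 / (((m : ℝ) + 1) * ((n : ℝ) + 1) * ((m : ℝ) + (n : ℝ) + 2)))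
      (Hh (m + 1) / ((m : ℝ) + 1) ^ 2) := by
  have h := (hasSum_inner m).mul_left (1 / ((m : ℝ) + 1) ^ 2)
  have hfun : ∀ n : ℕ,
      1 / ((m : ℝ) + 1) ^ 2 * (1 / ((n : ℝ) + 1) - 1 / ((n : ℝ) + (m : ℝ) + 2))
        = 1 / (((m : ℝ) + 1) * ((n : ℝ) + 1) * ((m : ℝ) + (n : ℝ) + 2)) := by
    intro n
    have h1 : ((m : ℝ) + 1) ≠ 0 := by positivity
    have h2 : ((n : ℝ) + 1) ≠ 0 := by positivity
    have h3 : ((n : ℝ) + (m : ℝ) + 2) ≠ 0 := by positivity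
    have h4 : ((m : ℝ) + (n : ℝ) + 2) ≠ 0 := by positivity
    field_simp
    ring
  simp only [hfun] at h
  have : 1 / ((m : ℝ) + 1) ^ 2 * Hh (m + 1) = Hh (m + 1) / ((m : ℝ) + 1) ^ 2 := by ring
  rwa [this] at h

private lemma Hh_le_sqrt (t : ℕ) : Hh t ≤ 2 * Real.sqrt t := by
  induction t with
  | zero => simp [Hh]
  | succ n ih =>
    have hstep : Hh (n + 1) = Hh n + 1 / ((n : ℝ) + 1) := by
      simp [Hh, Finset.sum_range_succ]
    have hkey : 1 / ((n : ℝ) + 1) ≤ 2 * (Real.sqrt (n + 1) - Real.sqrt n) := by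
      have hs1 : Real.sqrt ((n : ℝ) + 1) ^ 2 = (n : ℝ) + 1 := Real.sq_sqrt (by positivity)
      have hs2 : Real.sqrt (n : ℝ) ^ 2 = (n : ℝ) := Real.sq_sqrt (by positivity)
      have hn1 : Real.sqrt ((n : ℝ) + 1) ≤ (n : ℝ) + 1 := by
        nlinarith [Real.sqrt_nonneg ((n : ℝ) + 1)]
      have hn2 : Real.sqrt (n : ℝ) ≤ (n : ℝ) + 1 := by
        nlinarith [Real.sqrt_nonneg (n : ℝ)]
      have hpos : 0 < Real.sqrt ((n : ℝ) + 1) + Real.sqrt (n : ℝ) := by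
        have : (0:ℝ) < Real.sqrt ((n : ℝ) + 1) := Real.sqrt_pos.mpr (by positivity)
        have := Real.sqrt_nonneg (n : ℝ)
        linarith
      have hdiff : (Real.sqrt ((n : ℝ) + 1) - Real.sqrt (n : ℝ))
          * (Real.sqrt ((n : ℝ) + 1) + Real.sqrt (n : ℝ)) = 1 := by nlinarith
      rw [div_le_iff₀ (by positivity)]
      nlinarith
    push_cast at hkey ⊢
    linarith
private lemma bound_summable :
    Summable (fun t : ℕ => 2 / ((t : ℝ) + 1) ^ ((3:ℝ)/2)) := by
  have h : Summable (fun n : ℕ => 1 / (n : ℝ) ^ ((3:ℝ)/2)) :=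
    Real.summable_one_div_nat_rpow.mpr (by norm_num)
  have h2 : Summable (fun t : ℕ => 1 / ((t + 1 : ℕ) : ℝ) ^ ((3:ℝ)/2)) :=
    h.comp_injective (add_left_injective 1)
  have h3 : (fun t : ℕ => 2 / ((t : ℝ) + 1) ^ ((3:ℝ)/2))
      = fun t : ℕ => 2 * (1 / ((t + 1 : ℕ) : ℝ) ^ ((3:ℝ)/2)) := by
    funext t; push_cast; ring
  rw [h3]
  exact h2.mul_left 2

private lemma Hh_bound (t : ℕ) :
    Hh t / ((t : ℝ) + 1) ^ 2 ≤ 2 / ((t : ℝ) + 1) ^ ((3:ℝ)/2) := by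
  set x : ℝ := (t : ℝ) + 1 with hx
  have hx1 : (1:ℝ) ≤ x := by rw [hx]; have := Nat.cast_nonneg (α := ℝ) t; linarith
  have hx0 : (0:ℝ) < x := by linarith
  have h1 : Hh t ≤ 2 * Real.sqrt x := by
    refine (Hh_le_sqrt t).trans ?_
    have : Real.sqrt (t : ℝ) ≤ Real.sqrt x := Real.sqrt_le_sqrt (by simp [hx])
    linarith
  have hkey : 2 * Real.sqrt x / x ^ 2 = 2 / x ^ ((3:ℝ)/2) := by
    have h2 : x ^ ((3:ℝ)/2) * Real.sqrt x = x ^ 2 := by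
      rw [Real.sqrt_eq_rpow, ← Real.rpow_add hx0]
      have h3 : (3:ℝ)/2 + 1/2 = ((2:ℕ):ℝ) := by norm_num
      rw [h3, Real.rpow_natCast]
    rw [div_eq_div_iff (by positivity) (by positivity)]
    linear_combination 2 * h2
  rw [← hkey]
  exact (div_le_div_iff_of_pos_right (by positivity)).mpr h1

private def e1 : ℕ × ℕ ≃ {p : ℕ × ℕ // p.2 < p.1 ∧ 0 < p.2} where
  toFun q := ⟨(q.1 + q.2 + 2, q.1 + 1), by omega⟩
  invFun p := (p.1.2 - 1, p.1.1 - p.1.2 - 1)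
  left_inv q := by rcases q with ⟨a, b⟩; simp only [Prod.mk.injEq]; omega
  right_inv p := by
    rcases p with ⟨⟨k, j⟩, h1, h2⟩; apply Subtype.ext; simp only [Prod.mk.injEq]; omega

private def e2 : ℕ × ℕ ≃ {p : ℕ × ℕ // p.2 < p.1 ∧ 0 < p.2} where
  toFun q := ⟨(q.1 + q.2 + 2, q.2 + 1), by omega⟩
  invFun p := (p.1.1 - p.1.2 - 1, p.1.2 - 1)
  left_inv q := by rcases q with ⟨a, b⟩; simp only [Prod.mk.injEq]; omega
  right_inv p := by
    rcases p with ⟨⟨k, j⟩, h1, h2⟩; apply Subtype.ext; simp only [Prod.mk.injEq]; omega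

private def e3 : (Σ t : ℕ, Fin t) ≃ {p : ℕ × ℕ // p.2 < p.1 ∧ 0 < p.2} where
  toFun σ := ⟨(σ.1 + 1, (σ.2 : ℕ) + 1), by have := σ.2.isLt; omega⟩
  invFun p := ⟨p.1.1 - 1, ⟨p.1.2 - 1, by have h1 := p.2.1; have h2 := p.2.2; omega⟩⟩
  left_inv σ := by
    rcases σ with ⟨t, j⟩
    have hj := j.isLt
    simp only [Nat.add_sub_cancel]
    congr 1
  right_inv p := by
    rcases p with ⟨⟨k, j⟩, h1, h2⟩; apply Subtype.ext; simp only [Prod.mk.injEq]; omega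

private noncomputable def Z3 : ℝ≥0∞ := ∑' m : ℕ, ENNReal.ofReal (1 / ((m : ℝ) + 1) ^ 3)

private noncomputable def Z21 : ℝ≥0∞ :=
  ∑' p : {p : ℕ × ℕ // p.2 < p.1 ∧ 0 < p.2},
    ENNReal.ofReal (1 / ((p.1.1 : ℝ) ^ 2 * (p.1.2 : ℝ)))

private noncomputable def SS : ℝ≥0∞ :=
  ∑' q : ℕ × ℕ, ENNReal.ofReal
    (1 / (((q.1 : ℝ) + 1) * ((q.2 : ℝ) + 1) * ((q.1 : ℝ) + (q.2 : ℝ) + 2)))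

private noncomputable def ZH : ℝ≥0∞ := ∑' t : ℕ, ENNReal.ofReal (Hh t / ((t : ℝ) + 1) ^ 2)

private lemma lemma_SA : SS = Z21 + Z21 := by
  have split : ∀ q : ℕ × ℕ, ENNReal.ofReal
      (1 / (((q.1 : ℝ) + 1) * ((q.2 : ℝ) + 1) * ((q.1 : ℝ) + (q.2 : ℝ) + 2)))
      = ENNReal.ofReal (1 / (((q.1 : ℝ) + (q.2 : ℝ) + 2) ^ 2 * ((q.1 : ℝ) + 1)))
        + ENNReal.ofReal (1 / (((q.1 : ℝ) + (q.2 : ℝ) + 2) ^ 2 * ((q.2 : ℝ) + 1))) := by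
    rintro ⟨a, b⟩
    rw [← ENNReal.ofReal_add (by positivity) (by positivity)]
    congr 1
    have h1 : ((a : ℝ) + 1) ≠ 0 := by positivity
    have h2 : ((b : ℝ) + 1) ≠ 0 := by positivity
    have h3 : ((a : ℝ) + (b : ℝ) + 2) ≠ 0 := by positivity
    field_simp
    ring
  rw [SS, tsum_congr split, ENNReal.tsum_add]
  congr 1
  · rw [Z21, ← Equiv.tsum_eq e1
      (fun p : {p : ℕ × ℕ // p.2 < p.1 ∧ 0 < p.2} =>
        ENNReal.ofReal (1 / ((p.1.1 : ℝ) ^ 2 * (p.1.2 : ℝ))))]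
    apply tsum_congr
    rintro ⟨a, b⟩
    simp only [e1, Equiv.coe_fn_mk]
    congr 1
    push_cast
    ring
  · rw [Z21, ← Equiv.tsum_eq e2
      (fun p : {p : ℕ × ℕ // p.2 < p.1 ∧ 0 < p.2} =>
        ENNReal.ofReal (1 / ((p.1.1 : ℝ) ^ 2 * (p.1.2 : ℝ))))]
    apply tsum_congr
    rintro ⟨a, b⟩
    simp only [e2, Equiv.coe_fn_mk]
    congr 1
    push_cast
    ring

private lemma lemma_SB : SS = Z3 + ZH := by
  have hprod : SS = ∑' (m : ℕ) (n : ℕ), ENNReal.ofReal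
      (1 / (((m : ℝ) + 1) * ((n : ℝ) + 1) * ((m : ℝ) + (n : ℝ) + 2))) := by
    rw [SS]
    exact ENNReal.tsum_prod'
  have hinner : ∀ m : ℕ, (∑' n : ℕ, ENNReal.ofReal
      (1 / (((m : ℝ) + 1) * ((n : ℝ) + 1) * ((m : ℝ) + (n : ℝ) + 2))))
      = ENNReal.ofReal (Hh (m + 1) / ((m : ℝ) + 1) ^ 2) := by
    intro m
    rw [← ENNReal.ofReal_tsum_of_nonneg (fun n => by positivity) (hasSum_term m).summable,
      (hasSum_term m).tsum_eq]
  have hsplit : ∀ m : ℕ, ENNReal.ofReal (Hh (m + 1) / ((m : ℝ) + 1) ^ 2)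
      = ENNReal.ofReal (1 / ((m : ℝ) + 1) ^ 3)
        + ENNReal.ofReal (Hh m / ((m : ℝ) + 1) ^ 2) := by
    intro m
    rw [← ENNReal.ofReal_add (by positivity)
      (div_nonneg (Hh_nonneg m) (by positivity))]
    congr 1
    have hstep : Hh (m + 1) = Hh m + 1 / ((m : ℝ) + 1) := by
      simp [Hh, Finset.sum_range_succ]
    rw [hstep]
    have h1 : ((m : ℝ) + 1) ≠ 0 := by positivity
    field_simp
    ring
  rw [hprod, tsum_congr hinner, tsum_congr hsplit, ENNReal.tsum_add, Z3, ZH]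

private lemma lemma_ZH : Z21 = ZH := by
  rw [Z21, ← Equiv.tsum_eq e3
    (fun p : {p : ℕ × ℕ // p.2 < p.1 ∧ 0 < p.2} =>
      ENNReal.ofReal (1 / ((p.1.1 : ℝ) ^ 2 * (p.1.2 : ℝ)))), ENNReal.tsum_sigma', ZH]
  apply tsum_congr
  intro t
  rw [tsum_fintype]
  have hterm : ∀ j : Fin t,
      ENNReal.ofReal (1 / (((e3 ⟨t, j⟩ : {p : ℕ × ℕ // p.2 < p.1 ∧ 0 < p.2}).1.1 : ℝ) ^ 2
        * ((e3 ⟨t, j⟩ : {p : ℕ × ℕ // p.2 < p.1 ∧ 0 < p.2}).1.2 : ℝ)))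
      = ENNReal.ofReal (1 / (((t : ℝ) + 1) ^ 2 * (((j : ℕ) : ℝ) + 1))) := by
    intro j
    simp only [e3, Equiv.coe_fn_mk]
    congr 1
    push_cast
    ring
  rw [Finset.sum_congr rfl (fun j _ => hterm j)]
  rw [Fin.sum_univ_eq_sum_range (fun j : ℕ =>
    ENNReal.ofReal (1 / (((t : ℝ) + 1) ^ 2 * ((j : ℝ) + 1)))) t]
  rw [← ENNReal.ofReal_sum_of_nonneg (fun j _ => by positivity)]
  congr 1
  rw [Hh, Finset.sum_div]
  apply Finset.sum_congr rfl
  intro j _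
  have h1 : ((t : ℝ) + 1) ≠ 0 := by positivity
  have h2 : ((j : ℝ) + 1) ≠ 0 := by positivity
  field_simp

private lemma ZH_ne_top : ZH ≠ ⊤ := by
  have hle : ZH ≤ ∑' t : ℕ, ENNReal.ofReal (2 / ((t : ℝ) + 1) ^ ((3:ℝ)/2)) := by
    rw [ZH]
    exact ENNReal.tsum_le_tsum fun t => ENNReal.ofReal_le_ofReal (Hh_bound t)
  rw [← ENNReal.ofReal_tsum_of_nonneg (fun t => by positivity) bound_summable] at hle
  exact ne_top_of_le_ne_top ENNReal.ofReal_ne_top hle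

private lemma Z3_eq_Z21 : Z3 = Z21 := by
  have h1 : Z21 + Z21 = Z21 + Z3 := by
    calc Z21 + Z21 = SS := lemma_SA.symm
      _ = Z3 + ZH := lemma_SB
      _ = Z3 + Z21 := by rw [← lemma_ZH]
      _ = Z21 + Z3 := add_comm _ _
  have hfin : Z21 ≠ ⊤ := by rw [lemma_ZH]; exact ZH_ne_top
  exact ((ENNReal.add_right_inj hfin).mp h1).symm

/-- The simplest case of the duality formula for multiple zeta values:
`ζ(3) = ζ(2,1)`, i.e. `Σ_{m≥1} 1/m³ = Σ_{m₁>m₂≥1} 1/(m₁² m₂)`. -/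
theorem zeta_three_eq_zeta_two_one :
    (∑' m : ℕ, (1 : ℝ) / ((m : ℝ) + 1) ^ 3) =
      ∑' p : {p : ℕ × ℕ // p.2 < p.1 ∧ 0 < p.2},
        (1 : ℝ) / ((p.1.1 : ℝ) ^ 2 * (p.1.2 : ℝ)) := by
  have l3 : (∑' m : ℕ, (1 : ℝ) / ((m : ℝ) + 1) ^ 3) = Z3.toReal := by
    rw [Z3, ENNReal.tsum_toReal_eq (fun _ => ENNReal.ofReal_ne_top)]
    exact tsum_congr fun m => (ENNReal.toReal_ofReal (by positivity)).symm
  have l21 : (∑' p : {p : ℕ × ℕ // p.2 < p.1 ∧ 0 < p.2},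
      (1 : ℝ) / ((p.1.1 : ℝ) ^ 2 * (p.1.2 : ℝ))) = Z21.toReal := by
    rw [Z21, ENNReal.tsum_toReal_eq (fun _ => ENNReal.ofReal_ne_top)]
    exact tsum_congr fun p => (ENNReal.toReal_ofReal (by positivity)).symm
  rw [l3, l21, Z3_eq_Z21]
end

section
/- The duality case ζ(4) = ζ(2,1,1): Σ_{m≥1} 1/m⁴ = Σ_{m₁>m₂>m₃≥1} 1/(m₁² m₂ m₃). -/
/-!
Euler's partial-fraction method, carried out in `ℝ≥0∞` so that every interchange of summations
is free. Summing `1 / (m n² (m + n))` over `m, n ≥ 1` first over `m`, using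
`∑ₘ 1 / (m (m + n)) = H_n / n`, and alternatively after the splitting
`1 / (m n) = (1 / m + 1 / n) / (m + n)` gives `ζ(4) + ζ(3,1) = 2 ζ(3,1) + ζ(2,2)`. Summing
`1 / (a k b (b + k))` over `a < b` and `k ≥ 1` in the same two ways gives
`3 ζ(2,1,1) = 2 ζ(2,1,1) + ζ(2,2) + ζ(3,1)`. A telescoping bound shows `ζ(2,1,1) < ∞`, hence also
`ζ(3,1) < ∞`, and cancelling yields `ζ(4) = ζ(3,1) + ζ(2,2) = ζ(2,1,1)`.
-/

open Finset Filter Topology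
open scoped NNReal ENNReal

theorem Antitone.hasSum_sub_succ {g : ℕ → ℝ} (hg : Antitone g) (hlim : Tendsto g atTop (𝓝 0)) :
    HasSum (fun n ↦ g n - g (n + 1)) (g 0) := by
  rw [hasSum_iff_tendsto_nat_of_nonneg fun n ↦ sub_nonneg.2 (hg n.le_succ)]
  simp only [sum_range_sub']
  simpa using (tendsto_const_nhds (x := g 0)).sub hlim

theorem NNReal.hasSum_one_div_mul_add_one (y : ℝ≥0) (hy : y ≠ 0) :
    HasSum (fun k : ℕ ↦ 1 / ((k + y) * (k + y + 1))) (1 / y) := by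
  rw [← NNReal.hasSum_coe]
  have hanti : Antitone fun k : ℕ ↦ 1 / ((k : ℝ) + y) := fun m n hmn ↦
    one_div_le_one_div_of_le (by positivity) (by gcongr)
  have hlim : Tendsto (fun k : ℕ ↦ 1 / ((k : ℝ) + y)) atTop (𝓝 0) :=
    (tendsto_atTop_add_const_right _ _ tendsto_natCast_atTop_atTop).inv_tendsto_atTop.congr
      fun k ↦ (one_div _).symm
  convert hanti.hasSum_sub_succ hlim using 1
  · ext k
    push_cast
    field_simp
    ring
  · simp

theorem NNReal.sum_range_one_div_mul_add_one (x : ℝ≥0) (hx : x ≠ 0) (n : ℕ) :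
    ∑ j ∈ range n, 1 / ((x + j) * (x + j + 1)) = n / (x * (x + n)) := by
  induction n with
  | zero => simp
  | succ n ih =>
    rw [sum_range_succ, ih]
    push_cast
    field_simp
    ring

theorem NNReal.hasSum_one_div_mul_add (y : ℝ≥0) (hy : y ≠ 0) {n : ℕ} (hn : n ≠ 0) :
    HasSum (fun k : ℕ ↦ 1 / ((k + y) * (k + y + n))) (1 / n * ∑ j ∈ range n, 1 / (j + y)) := by
  have htelescope (k : ℕ) : 1 / ((k + y) * (k + y + n)) =
      1 / n * ∑ j ∈ range n, 1 / ((k + (j + y)) * (k + (j + y) + 1)) := by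
    simp_rw [← add_assoc, add_right_comm (k : ℝ≥0)]
    rw [NNReal.sum_range_one_div_mul_add_one _ (by positivity)]
    field_simp
  simp_rw [htelescope]
  exact (hasSum_sum fun j _ ↦ NNReal.hasSum_one_div_mul_add_one _ (by positivity)).mul_left _

theorem ENNReal.tsum_coe_one_div_add_one_sq_mul_le (x y : ℝ≥0) (hx : x ≠ 0) (hy : y ≠ 0) :
    ∑' k : ℕ, ((1 / ((x + k + 1) ^ 2 * y) : ℝ≥0) : ℝ≥0∞) ≤ ((1 / (x * y) : ℝ≥0) : ℝ≥0∞) := by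
  calc ∑' k : ℕ, ((1 / ((x + k + 1) ^ 2 * y) : ℝ≥0) : ℝ≥0∞)
      ≤ ∑' k : ℕ, ((1 / y : ℝ≥0) : ℝ≥0∞) * ((1 / ((k + x) * (k + x + 1)) : ℝ≥0) : ℝ≥0∞) := by
        refine ENNReal.tsum_le_tsum fun k ↦ ?_
        rw [← ENNReal.coe_mul, ENNReal.coe_le_coe, one_div_mul_one_div]
        refine one_div_le_one_div_of_le (by positivity) ?_
        rw [sq, add_comm x, mul_comm]
        exact mul_le_mul_of_nonneg_right (mul_le_mul_of_nonneg_right le_self_add zero_le) zero_le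
    _ = ((1 / (x * y) : ℝ≥0) : ℝ≥0∞) := by
        rw [ENNReal.tsum_mul_left,
          (ENNReal.hasSum_coe.2 (NNReal.hasSum_one_div_mul_add_one x hx)).tsum_eq,
          ← ENNReal.coe_mul, one_div_mul_one_div, mul_comm]

theorem ENNReal.tsum_sum_range_eq_tsum_tsum (g : ℕ → ℕ → ℝ≥0∞) :
    ∑' n, ∑ m ∈ range n, g n m = ∑' (m : ℕ) (i : ℕ), g (m + i + 1) m := by
  have hsupp (n : ℕ) : ∑ m ∈ range n, g n m = ∑' m, if m < n then g n m else 0 := by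
    rw [tsum_eq_sum (s := range n) fun m hm ↦ if_neg (by simpa using hm)]
    exact sum_congr rfl fun m hm ↦ (if_pos (mem_range.1 hm)).symm
  rw [tsum_congr hsupp, ENNReal.tsum_comm]
  refine tsum_congr fun m ↦ ?_
  rw [← ENNReal.summable.sum_add_tsum_nat_add' (k := m + 1),
    sum_eq_zero fun n hn ↦ if_neg (by simp at hn; omega), zero_add]
  exact tsum_congr fun i ↦ by rw [if_pos (by omega), show i + (m + 1) = m + i + 1 by omega]

namespace MultipleZeta

noncomputable section

-- Sums over `m₁ > m₂ > m₃ ≥ 1` are written in the gap coordinates `m₃ = c + 1`, `m₂ = c + d + 2`,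
-- `m₁ = c + d + e + 3`, so that every sum runs over all of `ℕ`.

def zeta4 : ℝ≥0∞ := ∑' n : ℕ, ((1 / ((n : ℝ≥0) + 1) ^ 4 : ℝ≥0) : ℝ≥0∞)

def zeta31 : ℝ≥0∞ :=
  ∑' (c : ℕ) (d : ℕ), ((1 / (((c : ℝ≥0) + d + 2) ^ 3 * (c + 1)) : ℝ≥0) : ℝ≥0∞)

def zeta22 : ℝ≥0∞ :=
  ∑' (c : ℕ) (d : ℕ), ((1 / (((c : ℝ≥0) + d + 2) ^ 2 * (c + 1) ^ 2) : ℝ≥0) : ℝ≥0∞)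

def zeta211 : ℝ≥0∞ := ∑' (c : ℕ) (d : ℕ) (e : ℕ),
  ((1 / (((c : ℝ≥0) + d + e + 3) ^ 2 * (c + d + 2) * (c + 1)) : ℝ≥0) : ℝ≥0∞)

def doubleSum : ℝ≥0∞ :=
  ∑' (n : ℕ) (m : ℕ), ((1 / (((m : ℝ≥0) + 1) * (n + 1) ^ 2 * (m + n + 2)) : ℝ≥0) : ℝ≥0∞)

def tripleSum : ℝ≥0∞ := ∑' (c : ℕ) (d : ℕ) (e : ℕ),
  ((1 / (((c : ℝ≥0) + 1) * (e + 1) * (c + d + 2) * (c + d + e + 3)) : ℝ≥0) : ℝ≥0∞)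

end

theorem doubleSum_eq_zeta4_add_zeta31 : doubleSum = zeta4 + zeta31 := by
  have hinner (n : ℕ) : HasSum (fun m : ℕ ↦ 1 / (((m : ℝ≥0) + 1) * (n + 1) ^ 2 * (m + n + 2)))
      (1 / ((n : ℝ≥0) + 1) ^ 4 + ∑ j ∈ range n, 1 / (((n : ℝ≥0) + 1) ^ 3 * (j + 1))) := by
    have hvalue : 1 / ((n : ℝ≥0) + 1) ^ 4 + ∑ j ∈ range n, 1 / (((n : ℝ≥0) + 1) ^ 3 * (j + 1)) =
        1 / ((n : ℝ≥0) + 1) ^ 2 *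
          (1 / ((n + 1 : ℕ) : ℝ≥0) * ∑ j ∈ range (n + 1), 1 / ((j : ℝ≥0) + 1)) := by
      rw [sum_range_succ, mul_add, mul_add, mul_sum, mul_sum, add_comm]
      push_cast
      congr 1
      · exact sum_congr rfl fun j _ ↦ by field_simp
      · field_simp
    rw [hvalue]
    refine ((NNReal.hasSum_one_div_mul_add 1 one_ne_zero n.succ_ne_zero).mul_left _).congr_fun
      fun m ↦ ?_
    push_cast
    field_simp
    ring
  simp_rw [doubleSum, fun n ↦ (ENNReal.hasSum_coe.2 (hinner n)).tsum_eq, ENNReal.coe_add,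
    ENNReal.ofNNReal_finsetSum, ENNReal.tsum_add, ENNReal.tsum_sum_range_eq_tsum_tsum]
  congr 1
  refine tsum_congr fun c ↦ tsum_congr fun d ↦ ?_
  push_cast
  ring_nf

theorem doubleSum_eq_zeta31_add_zeta31_add_zeta22 : doubleSum = zeta31 + zeta31 + zeta22 := by
  have hsplit (n m : ℕ) : 1 / (((m : ℝ≥0) + 1) * (n + 1) ^ 2 * (m + n + 2)) =
      1 / (((n : ℝ≥0) + m + 2) ^ 3 * (n + 1)) + 1 / (((m : ℝ≥0) + n + 2) ^ 3 * (m + 1)) +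
        1 / (((n : ℝ≥0) + m + 2) ^ 2 * (n + 1) ^ 2) := by
    field_simp
    ring
  simp_rw [doubleSum, hsplit, ENNReal.coe_add, ENNReal.tsum_add]
  congr 2
  exact ENNReal.tsum_comm

theorem tripleSum_eq_zeta211_add_zeta211_add_zeta211 :
    tripleSum = zeta211 + zeta211 + zeta211 := by
  have hsplit (c d e : ℕ) :
      1 / (((c : ℝ≥0) + 1) * (e + 1) * (c + d + 2) * (c + d + e + 3)) =
        1 / (((c : ℝ≥0) + d + e + 3) ^ 2 * (c + d + 2) * (c + 1)) +
          1 / (((c : ℝ≥0) + d + e + 3) ^ 2 * (c + e + 2) * (c + 1)) +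
          1 / (((c : ℝ≥0) + d + e + 3) ^ 2 * (c + e + 2) * (e + 1)) := by
    field_simp
    ring
  have hswap : ∑' (c : ℕ) (d : ℕ) (e : ℕ),
      ((1 / (((c : ℝ≥0) + d + e + 3) ^ 2 * (c + e + 2) * (c + 1)) : ℝ≥0) : ℝ≥0∞) = zeta211 := by
    refine tsum_congr fun c ↦ ?_
    rw [ENNReal.tsum_comm]
    refine tsum_congr fun e ↦ tsum_congr fun d ↦ ?_
    ring_nf
  have hreverse : ∑' (c : ℕ) (d : ℕ) (e : ℕ),
      ((1 / (((c : ℝ≥0) + d + e + 3) ^ 2 * (c + e + 2) * (e + 1)) : ℝ≥0) : ℝ≥0∞) = zeta211 := by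
    rw [← hswap, ENNReal.tsum_comm, tsum_congr fun d ↦ ENNReal.tsum_comm, ENNReal.tsum_comm]
    refine tsum_congr fun e ↦ tsum_congr fun d ↦ tsum_congr fun c ↦ ?_
    ring_nf
  simp_rw [tripleSum, hsplit, ENNReal.coe_add, ENNReal.tsum_add]
  rw [hswap, hreverse]
  rfl

theorem hasSum_tripleSum_inner (c d : ℕ) :
    HasSum (fun e : ℕ ↦ 1 / (((c : ℝ≥0) + 1) * (e + 1) * (c + d + 2) * (c + d + e + 3)))
      (∑ j ∈ range (c + d + 2), 1 / (((c : ℝ≥0) + d + 2) ^ 2 * (c + 1) * (j + 1))) := by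
  have hvalue : ∑ j ∈ range (c + d + 2), 1 / (((c : ℝ≥0) + d + 2) ^ 2 * (c + 1) * (j + 1)) =
      1 / (((c : ℝ≥0) + 1) * (c + d + 2)) *
        (1 / ((c + d + 2 : ℕ) : ℝ≥0) * ∑ j ∈ range (c + d + 2), 1 / ((j : ℝ≥0) + 1)) := by
    rw [mul_sum, mul_sum]
    refine sum_congr rfl fun j _ ↦ ?_
    push_cast
    field_simp
  rw [hvalue]
  refine ((NNReal.hasSum_one_div_mul_add 1 one_ne_zero (c + d + 1).succ_ne_zero).mul_left
    _).congr_fun fun e ↦ ?_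
  push_cast
  field_simp
  ring

theorem tripleSum_eq_zeta211_add_zeta211_add_zeta22_add_zeta31 :
    tripleSum = zeta211 + zeta211 + (zeta22 + zeta31) := by
  set F : ℕ → ℕ → ℕ → ℝ≥0∞ := fun c d j ↦
    ((1 / (((c : ℝ≥0) + d + 2) ^ 2 * (c + 1) * (j + 1)) : ℝ≥0) : ℝ≥0∞) with hF
  -- `H_{m₂}` split at `m₃`; the four parts produce `ζ(2,1,1)`, `ζ(2,2)`, `ζ(2,1,1)`, `ζ(3,1)`.
  have hinner (c d : ℕ) : ∑' e : ℕ,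
      ((1 / (((c : ℝ≥0) + 1) * (e + 1) * (c + d + 2) * (c + d + e + 3)) : ℝ≥0) : ℝ≥0∞) =
        (∑ j ∈ range c, F c d j + F c d c) +
          (∑ i ∈ range d, F c d (c + 1 + i) + F c d (c + 1 + d)) := by
    rw [(ENNReal.hasSum_coe.2 (hasSum_tripleSum_inner c d)).tsum_eq, ENNReal.ofNNReal_finsetSum,
      show c + d + 2 = (c + 1) + (d + 1) by ring, sum_range_add, sum_range_succ, sum_range_succ]
  have hA : ∑' (c : ℕ) (d : ℕ), ∑ j ∈ range c, F c d j = zeta211 := by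
    rw [tsum_congr fun c ↦ Summable.tsum_finsetSum fun _ _ ↦ ENNReal.summable,
      ENNReal.tsum_sum_range_eq_tsum_tsum fun c j ↦ ∑' d, F c d j]
    simp only [hF]
    refine tsum_congr fun j ↦ tsum_congr fun i ↦ tsum_congr fun d ↦ ?_
    congr 2
    push_cast
    ring
  have hB : ∑' (c : ℕ) (d : ℕ), F c d c = zeta22 := by
    simp only [hF]
    refine tsum_congr fun c ↦ tsum_congr fun d ↦ ?_
    congr 2
    ring
  have hC : ∑' (c : ℕ) (d : ℕ), ∑ i ∈ range d, F c d (c + 1 + i) = zeta211 := by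
    simp only [hF]
    refine tsum_congr fun c ↦ ?_
    rw [ENNReal.tsum_sum_range_eq_tsum_tsum]
    refine tsum_congr fun d ↦ tsum_congr fun e ↦ ?_
    congr 2
    push_cast
    ring
  have hD : ∑' (c : ℕ) (d : ℕ), F c d (c + 1 + d) = zeta31 := by
    simp only [hF]
    refine tsum_congr fun c ↦ tsum_congr fun d ↦ ?_
    congr 2
    push_cast
    ring
  simp_rw [tripleSum, hinner, ENNReal.tsum_add, hA, hB, hC, hD]
  exact add_add_add_comm _ _ _ _

theorem zeta211_ne_top : zeta211 ≠ ⊤ := by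
  have hsummable : Summable fun c : ℕ ↦ (1 / (((c : ℝ≥0) + 1) * (c + 1)) : ℝ≥0) := by
    rw [← NNReal.summable_coe]
    push_cast
    simpa [sq] using (summable_nat_add_iff 1).2 (Real.summable_one_div_nat_pow.2 one_lt_two)
  refine ne_top_of_le_ne_top (ENNReal.tsum_coe_ne_top_iff_summable.2 hsummable) ?_
  refine ENNReal.tsum_le_tsum fun c ↦ ?_
  calc ∑' (d : ℕ) (e : ℕ),
        ((1 / (((c : ℝ≥0) + d + e + 3) ^ 2 * (c + d + 2) * (c + 1)) : ℝ≥0) : ℝ≥0∞)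
      ≤ ∑' d : ℕ, ((1 / (((c : ℝ≥0) + 1 + d + 1) ^ 2 * (c + 1)) : ℝ≥0) : ℝ≥0∞) := by
        refine ENNReal.tsum_le_tsum fun d ↦ (tsum_congr fun e ↦ ?_).trans_le
          ((ENNReal.tsum_coe_one_div_add_one_sq_mul_le ((c : ℝ≥0) + d + 2)
            ((c + d + 2) * (c + 1)) (by positivity) (by positivity)).trans_eq ?_)
        all_goals congr 2; ring
    _ ≤ _ := ENNReal.tsum_coe_one_div_add_one_sq_mul_le _ _ (by positivity) (by positivity)

theorem zeta4_eq_zeta211 : zeta4 = zeta211 := by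
  have h211 : zeta211 = zeta22 + zeta31 :=
    (ENNReal.add_right_inj (ENNReal.add_ne_top.2 ⟨zeta211_ne_top, zeta211_ne_top⟩)).1
      (tripleSum_eq_zeta211_add_zeta211_add_zeta211.symm.trans
        tripleSum_eq_zeta211_add_zeta211_add_zeta22_add_zeta31)
  have h31 : zeta31 ≠ ⊤ := ne_top_of_le_ne_top zeta211_ne_top (h211 ▸ le_add_self)
  have h4 : zeta4 = zeta31 + zeta22 := (ENNReal.add_right_inj h31).1 <| by
    rw [add_comm, ← doubleSum_eq_zeta4_add_zeta31, doubleSum_eq_zeta31_add_zeta31_add_zeta22,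
      add_assoc]
  rw [h4, h211, add_comm]

def tripleGapEquiv : ℕ × ℕ × ℕ ≃ {t : ℕ × ℕ × ℕ // t.2.1 < t.1 ∧ t.2.2 < t.2.1 ∧ 0 < t.2.2} where
  toFun p := ⟨(p.1 + p.2.1 + p.2.2 + 3, p.1 + p.2.1 + 2, p.1 + 1), by dsimp only; omega⟩
  invFun t := (t.1.2.2 - 1, t.1.2.1 - t.1.2.2 - 1, t.1.1 - t.1.2.1 - 1)
  left_inv p := by ext <;> simp <;> omega
  right_inv t := by ext <;> simp <;> omega

theorem zeta4_toReal : zeta4.toReal = ∑' m : ℕ, (1 : ℝ) / ((m : ℝ) + 1) ^ 4 := by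
  rw [zeta4, ENNReal.tsum_toReal_eq fun _ ↦ ENNReal.coe_ne_top]
  refine tsum_congr fun n ↦ ?_
  rw [ENNReal.coe_toReal]
  push_cast
  rfl

theorem zeta211_toReal : zeta211.toReal =
    ∑' t : {t : ℕ × ℕ × ℕ // t.2.1 < t.1 ∧ t.2.2 < t.2.1 ∧ 0 < t.2.2},
      (1 : ℝ) / ((t.1.1 : ℝ) ^ 2 * (t.1.2.1 : ℝ) * (t.1.2.2 : ℝ)) := by
  have hprod : zeta211 = ∑' p : ℕ × ℕ × ℕ, ((1 / (((p.1 : ℝ≥0) + p.2.1 + p.2.2 + 3) ^ 2 *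
      (p.1 + p.2.1 + 2) * (p.1 + 1)) : ℝ≥0) : ℝ≥0∞) := by
    simp_rw [ENNReal.tsum_prod']
    rfl
  rw [← tripleGapEquiv.tsum_eq, hprod, ENNReal.tsum_toReal_eq fun _ ↦ ENNReal.coe_ne_top]
  refine tsum_congr fun p ↦ ?_
  rw [ENNReal.coe_toReal]
  simp only [tripleGapEquiv, Equiv.coe_fn_mk]
  push_cast
  rfl

end MultipleZeta

/-- The duality case `ζ(4) = ζ(2,1,1)`:
`Σ_{m≥1} 1/m⁴ = Σ_{m₁>m₂>m₃≥1} 1/(m₁² m₂ m₃)`. -/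
theorem zeta_four_eq_zeta_two_one_one :
    (∑' m : ℕ, (1 : ℝ) / ((m : ℝ) + 1) ^ 4) =
      ∑' t : {t : ℕ × ℕ × ℕ // t.2.1 < t.1 ∧ t.2.2 < t.2.1 ∧ 0 < t.2.2},
        (1 : ℝ) / ((t.1.1 : ℝ) ^ 2 * (t.1.2.1 : ℝ) * (t.1.2.2 : ℝ)) := by
  rw [← MultipleZeta.zeta4_toReal, ← MultipleZeta.zeta211_toReal, MultipleZeta.zeta4_eq_zeta211]
end

section
/- For letters c ∈ Σ \ {b} and words w over the alphabet indexed by Σ not ending in x_b, the multiple polylogarithm satisfies the differential relation d/dz Li_b(x_c w; z) = (1/(z−c)) · Li_b(w; z) on the disc |z−b| < min_{c'≠b} |c'−b| minus the point c (in particular for z in that disc with z ≠ c). -/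
/-!
Put `t = z - b`. By telescoping, the summand of `Li_b(w; z)` indexed by the chain
`m₁ > ⋯ > m_r > 0` is a monomial `a(m) t^{m₁}` with `|a(m)| ≤ R^{-m₁}`, where `R` bounds the
`|c_i - b|` from below, and there are only polynomially many chains with a given `m₁`; so the
series can be differentiated termwise on `|t| < R`. For the word `x_c w` a chain is a chain
`m'` of `w` topped by `m₁ = m'₁ + j + 1`, and `a(m) = (c - b)^{-(j+1)} a(m') / m₁`. The factor
`m₁` cancels against the derivative of `t^{m₁}`, and summing over `j` leaves the geometric series
`Σ_j (c - b)^{-(j+1)} t^j = 1 / (c - z)`.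
-/

/-- The one-variable multiple polylogarithm attached to the base point `b`, exponents
`k : Fin r → ℕ` and letters `c : Fin r → ℂ` (the word
`x_b^{k₁−1} x_{c₁} ⋯ x_b^{k_r−1} x_{c_r}`), including the sign `(−1)^r`:
`Li(z) = (−1)^r Σ_{m₁>⋯>m_r>0} ∏_i ((z−b)/(c_i−b))^{m_i−m_{i+1}} / m_i^{k_i}`
with the convention `m_{r+1} = 0`. -/
noncomputable def polyLi (b : ℂ) (r : ℕ) (k : Fin r → ℕ) (c : Fin r → ℂ) (z : ℂ) : ℂ :=
  (-1 : ℂ) ^ r *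
    ∑' m : {f : Fin r → ℕ // StrictAnti f ∧ ∀ i, 0 < f i},
      ∏ i : Fin r,
        ((z - b) / (c i - b)) ^
            (m.1 i - (if h : (i : ℕ) + 1 < r then m.1 ⟨(i : ℕ) + 1, h⟩ else 0)) /
          ((m.1 i : ℂ)) ^ (k i)

namespace PolyLi

theorem exists_gt_forall_lt_of_finite {ι : Type*} [Finite ι] {x : ℝ} {f : ι → ℝ}
    (h : ∀ i, x < f i) : ∃ y, x < y ∧ ∀ i, y < f i := by
  have hnhds : ∀ᶠ y in nhds x, ∀ i, y < f i :=
    Filter.eventually_all.2 fun i => eventually_lt_nhds (h i)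
  obtain ⟨ε, hε, hball⟩ := Metric.eventually_nhds_iff.1 hnhds
  exact ⟨x + ε / 2, by linarith, hball (by rw [Real.dist_eq, abs_of_pos] <;> linarith)⟩

theorem summable_succ_mul_geometric {q : ℝ} (hq0 : 0 ≤ q) (hq1 : q < 1) :
    Summable fun j : ℕ => ((j : ℝ) + 1) * q ^ j := by
  have hq : ‖q‖ < 1 := by rwa [Real.norm_of_nonneg hq0]
  simpa [add_mul] using
    (summable_pow_mul_geometric_of_norm_lt_one 1 hq).add (summable_geometric_of_lt_one hq0 hq1)

theorem hasDerivAt_tsum_mul_pow {ι : Type*} (a : ι → ℂ) (n : ι → ℕ) {b z : ℂ} {ρ : ℝ}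
    (hs : Summable fun i => ‖a i‖ * ((n i + 1) * ρ ^ n i)) (hz : ‖z - b‖ < ρ) :
    HasDerivAt (fun y => ∑' i, a i * (y - b) ^ n i)
      (∑' i, a i * (n i * (z - b) ^ (n i - 1))) z := by
  have hρ : 0 < ρ := (norm_nonneg _).trans_lt hz
  have hball : z ∈ Metric.ball b ρ := by rwa [Metric.mem_ball, dist_eq_norm]
  refine hasDerivAt_tsum_of_isPreconnected (g := fun i y => a i * (y - b) ^ n i)
    (g' := fun i y => a i * (n i * (y - b) ^ (n i - 1))) (hs.mul_left ρ⁻¹) Metric.isOpen_ball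
    (convex_ball b ρ).isPreconnected (fun i y _ => ?_) (fun i y hy => ?_) hball
    (hs.of_norm_bounded fun i => ?_) hball
  · simpa using (((hasDerivAt_id y).sub_const b).pow (n i)).const_mul (a i)
  · rw [Metric.mem_ball, dist_eq_norm] at hy
    rw [norm_mul, norm_mul, norm_pow, Complex.norm_natCast]
    have hderiv : (n i : ℝ) * ρ ^ (n i - 1) ≤ ρ⁻¹ * ((n i + 1) * ρ ^ n i) := by
      rcases n i with _ | m
      · simpa using hρ.le
      · rw [Nat.add_sub_cancel, pow_succ,
          show ρ⁻¹ * ((↑(m + 1) + 1) * (ρ ^ m * ρ)) = (↑(m + 1) + 1) * ρ ^ m by field_simp]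
        gcongr
        linarith
    calc ‖a i‖ * (n i * ‖y - b‖ ^ (n i - 1)) ≤ ‖a i‖ * (n i * ρ ^ (n i - 1)) := by
          gcongr
      _ ≤ ‖a i‖ * (ρ⁻¹ * ((n i + 1) * ρ ^ n i)) := by gcongr
      _ = ρ⁻¹ * (‖a i‖ * ((n i + 1) * ρ ^ n i)) := by ring
  · rw [norm_mul, norm_pow]
    have hpow : ‖z - b‖ ^ n i ≤ ρ ^ n i := by gcongr
    have hsucc : ρ ^ n i ≤ (n i + 1) * ρ ^ n i := le_mul_of_one_le_left (by positivity) (by simp)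
    gcongr
    exact hpow.trans hsucc

abbrev Chain (s : ℕ) := {f : Fin s → ℕ // StrictAnti f ∧ ∀ i, 0 < f i}

variable {s : ℕ}

/-- `m (i + 1)`, and `0` past the end: the convention `m_{r+1} = 0`. -/
def next (m : Fin s → ℕ) (i : Fin s) : ℕ :=
  if h : (i : ℕ) + 1 < s then m ⟨(i : ℕ) + 1, h⟩ else 0

def head (m : Fin s → ℕ) : ℕ :=
  if h : 0 < s then m ⟨0, h⟩ else 0

@[simp]
theorem head_cons (a : ℕ) (m : Fin s → ℕ) : head (Fin.cons a m : Fin (s + 1) → ℕ) = a := by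
  simp [head]

@[simp]
theorem next_cons_zero (a : ℕ) (m : Fin s → ℕ) :
    next (Fin.cons a m : Fin (s + 1) → ℕ) 0 = head m := by
  rcases s with _ | s <;> rfl

@[simp]
theorem next_cons_succ (a : ℕ) (m : Fin s → ℕ) (i : Fin s) :
    next (Fin.cons a m : Fin (s + 1) → ℕ) i.succ = next m i := by
  unfold next
  simp only [Fin.val_succ, add_lt_add_iff_right]
  split_ifs <;> rfl

theorem head_le_of_antitone {m : Fin (s + 1) → ℕ} (hm : Antitone m) : head (Fin.tail m) ≤ m 0 := by
  rcases s with _ | s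
  · simp [head]
  · exact hm (Fin.zero_le _)

theorem sum_sub_next_eq_head {m : Fin s → ℕ} (hm : Antitone m) :
    ∑ i, (m i - next m i) = head m := by
  induction s with
  | zero => simp [head]
  | succ s ih =>
    have htail : Antitone (Fin.tail m) := hm.comp_monotone (Fin.strictMono_succ.monotone)
    rw [← Fin.cons_self_tail m] at hm ⊢
    simp only [Fin.sum_univ_succ, Fin.cons_zero, Fin.cons_succ, next_cons_zero, next_cons_succ,
      head_cons, ih htail]
    have hhead := head_le_of_antitone hm
    simp only [Fin.cons_zero, Fin.tail_cons] at hhead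
    omega

theorem strictAnti_cons {a : ℕ} {m : Fin s → ℕ} (hm : StrictAnti m) (ha : head m < a) :
    StrictAnti (Fin.cons a m : Fin (s + 1) → ℕ) := by
  rcases s with _ | s
  · exact fun i j hij => absurd hij (by rw [Fin.lt_def]; omega)
  · exact strictAnti_vecCons.2 ⟨ha, hm⟩

theorem Chain.head_tail_lt (m : Chain (s + 1)) : head (Fin.tail m.1) < m.1 0 := by
  rcases s with _ | s
  · simpa [head] using m.2.2 0
  · exact m.2.1 (Fin.succ_pos 0)

def Chain.consEquiv : ℕ × Chain s ≃ Chain (s + 1) where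
  toFun p := ⟨Fin.cons (head p.2.1 + p.1 + 1) p.2.1,
    strictAnti_cons p.2.2.1 (by omega), Fin.cases (by simp) (by simpa using p.2.2.2)⟩
  invFun m := (m.1 0 - head (Fin.tail m.1) - 1,
    ⟨Fin.tail m.1, m.2.1.comp_strictMono (Fin.strictMono_succ), fun i => m.2.2 _⟩)
  left_inv p := by ext <;> simp; omega
  right_inv m := by
    have hlt := m.head_tail_lt
    ext i
    refine Fin.cases ?_ (fun _ => rfl) i
    simp only [Fin.cons_zero]
    omega

@[simp]
theorem Chain.consEquiv_apply_coe (p : ℕ × Chain s) :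
    (Chain.consEquiv p).1 = Fin.cons (head p.2.1 + p.1 + 1) p.2.1 := rfl

theorem Chain.summable_head_succ_mul_geometric {q : ℝ} (hq0 : 0 ≤ q) (hq1 : q < 1) :
    Summable fun m : Chain s => ((head m.1 : ℝ) + 1) * q ^ head m.1 := by
  induction s with
  | zero => exact Summable.of_finite
  | succ s ih =>
    rw [← Chain.consEquiv.summable_iff]
    have hgeo := summable_succ_mul_geometric hq0 hq1
    refine Summable.of_nonneg_of_le (fun _ => by simp only [Function.comp_apply]; positivity)
      (fun ⟨j, m⟩ => ?_)
      ((hgeo.mul_of_nonneg ih (fun _ => by positivity) fun _ => by positivity).mul_left 2)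
    set a := head m.1
    simp only [Function.comp_apply, Chain.consEquiv_apply_coe, head_cons]
    have hpow : q ^ (a + j + 1) ≤ q ^ a * q ^ j := by
      rw [← pow_add]; exact pow_le_pow_of_le_one hq0 hq1.le (by omega)
    have hcoef : ((a + j + 1 : ℕ) : ℝ) + 1 ≤ 2 * (((a : ℝ) + 1) * ((j : ℝ) + 1)) := by
      push_cast; nlinarith [(a.cast_nonneg : (0 : ℝ) ≤ a), (j.cast_nonneg : (0 : ℝ) ≤ j)]
    calc ((a + j + 1 : ℕ) + 1 : ℝ) * q ^ (a + j + 1)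
        ≤ 2 * (((a : ℝ) + 1) * ((j : ℝ) + 1)) * (q ^ a * q ^ j) :=
          mul_le_mul hcoef hpow (by positivity) (by positivity)
      _ = 2 * ((((j : ℝ) + 1) * q ^ j) * (((a : ℝ) + 1) * q ^ a)) := by ring

section Coeff

variable (b : ℂ) (k : Fin s → ℕ) (c : Fin s → ℂ)

noncomputable def coeff (m : Fin s → ℕ) : ℂ :=
  ∏ i, (c i - b)⁻¹ ^ (m i - next m i) / (m i : ℂ) ^ k i

theorem prod_eq_coeff_mul_pow {m : Fin s → ℕ} (hm : Antitone m) (y : ℂ) :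
    ∏ i, ((y - b) / (c i - b)) ^ (m i - next m i) / (m i : ℂ) ^ k i =
      coeff b k c m * (y - b) ^ head m := by
  rw [coeff, ← sum_sub_next_eq_head hm, ← Finset.prod_pow_eq_pow_sum, ← Finset.prod_mul_distrib]
  refine Finset.prod_congr rfl fun i _ => ?_
  rw [div_pow, inv_pow]
  ring

theorem polyLi_eq_tsum (y : ℂ) :
    polyLi b s k c y = (-1) ^ s * ∑' m : Chain s, coeff b k c m.1 * (y - b) ^ head m.1 :=
  congrArg _ <| tsum_congr fun m => prod_eq_coeff_mul_pow b k c m.2.1.antitone y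

theorem norm_coeff_le {R : ℝ} (hR : 0 < R) (hc : ∀ i, R ≤ ‖c i - b‖) (m : Chain s) :
    ‖coeff b k c m.1‖ ≤ R⁻¹ ^ head m.1 := by
  rw [← sum_sub_next_eq_head m.2.1.antitone, ← Finset.prod_pow_eq_pow_sum, coeff, norm_prod]
  refine Finset.prod_le_prod (fun _ _ => norm_nonneg _) fun i _ => ?_
  have hm : (1 : ℝ) ≤ ‖(m.1 i : ℂ)‖ ^ k i := by
    rw [Complex.norm_natCast]
    exact one_le_pow₀ (by exact_mod_cast m.2.2 i)
  rw [norm_div, norm_pow, norm_pow, norm_inv]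
  calc ‖c i - b‖⁻¹ ^ _ / _ ≤ ‖c i - b‖⁻¹ ^ (m.1 i - next m.1 i) := div_le_self (by positivity) hm
    _ ≤ R⁻¹ ^ (m.1 i - next m.1 i) := by gcongr; exact hc i

@[simp]
theorem coeff_cons (k₀ : ℕ) (c₀ : ℂ) (a : ℕ) (m : Fin s → ℕ) :
    coeff b (Fin.cons k₀ k : Fin (s + 1) → ℕ) (Fin.cons c₀ c) (Fin.cons a m) =
      (c₀ - b)⁻¹ ^ (a - head m) / (a : ℂ) ^ k₀ * coeff b k c m := by
  simp only [coeff, Fin.prod_univ_succ, Fin.cons_zero, Fin.cons_succ, next_cons_zero,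
    next_cons_succ]

theorem summable_norm_coeff_mul_succ_mul_pow {ρ : ℝ}
    (hρ0 : 0 ≤ ρ) (hρ : ∀ i, ρ < ‖c i - b‖) :
    Summable fun m : Chain s => ‖coeff b k c m.1‖ * ((head m.1 + 1) * ρ ^ head m.1) := by
  obtain ⟨R, hρR, hR⟩ := exists_gt_forall_lt_of_finite hρ
  have hR0 : 0 < R := hρ0.trans_lt hρR
  refine Summable.of_nonneg_of_le (fun _ => by positivity) (fun m => ?_)
    (Chain.summable_head_succ_mul_geometric (div_nonneg hρ0 hR0.le) ((div_lt_one hR0).2 hρR))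
  calc ‖coeff b k c m.1‖ * ((head m.1 + 1) * ρ ^ head m.1)
      ≤ R⁻¹ ^ head m.1 * ((head m.1 + 1) * ρ ^ head m.1) := by
        gcongr; exact norm_coeff_le b k c hR0 (fun i => (hR i).le) m
    _ = (head m.1 + 1) * (ρ / R) ^ head m.1 := by rw [div_pow, inv_pow]; ring

theorem hasDerivAt_polyLi {z : ℂ} (hz : ∀ i, ‖z - b‖ < ‖c i - b‖) :
    HasDerivAt (polyLi b s k c)
      ((-1) ^ s * ∑' m : Chain s, coeff b k c m.1 * (head m.1 * (z - b) ^ (head m.1 - 1))) z := by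
  obtain ⟨ρ, hzρ, hρ⟩ := exists_gt_forall_lt_of_finite hz
  have hsum := summable_norm_coeff_mul_succ_mul_pow b k c ((norm_nonneg _).trans hzρ.le) hρ
  rw [funext (polyLi_eq_tsum b k c)]
  exact (hasDerivAt_tsum_mul_pow _ _ hsum hzρ).const_mul _

theorem tsum_coeff_cons_mul_deriv (c₀ : ℂ) {z : ℂ}
    (hz : ∀ i, ‖z - b‖ < ‖c i - b‖) (hz₀ : ‖z - b‖ < ‖c₀ - b‖) :
    ∑' m : Chain (s + 1), coeff b (Fin.cons 1 k) (Fin.cons c₀ c) m.1 *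
        (head m.1 * (z - b) ^ (head m.1 - 1)) =
      (c₀ - z)⁻¹ * ∑' m : Chain s, coeff b k c m.1 * (z - b) ^ head m.1 := by
  set t := z - b
  set d := c₀ - b with hd_def
  have hd : d ≠ 0 := norm_pos_iff.1 ((norm_nonneg _).trans_lt hz₀)
  have hx : ‖t / d‖ < 1 := by rwa [norm_div, div_lt_one (norm_pos_iff.2 hd)]
  have hgeo : Summable fun j : ℕ => ‖d⁻¹ * (t / d) ^ j‖ := by
    simpa [norm_mul, norm_pow] using
      (summable_geometric_of_lt_one (norm_nonneg _) hx).mul_left ‖d⁻¹‖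
  have htail : Summable fun m : Chain s => ‖coeff b k c m.1 * t ^ head m.1‖ := by
    refine (summable_norm_coeff_mul_succ_mul_pow b k c (norm_nonneg t) hz).of_nonneg_of_le
      (fun _ => norm_nonneg _) fun m => ?_
    rw [norm_mul, norm_pow]
    gcongr
    exact le_mul_of_one_le_left (by positivity) (by simp)
  have hterm : ∀ p : ℕ × Chain s,
      coeff b (Fin.cons 1 k) (Fin.cons c₀ c) (Chain.consEquiv p).1 *
          (head (Chain.consEquiv p).1 * t ^ (head (Chain.consEquiv p).1 - 1)) =
        d⁻¹ * (t / d) ^ p.1 * (coeff b k c p.2.1 * t ^ head p.2.1) := by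
    rintro ⟨j, m⟩
    have hN : ((head m.1 + j + 1 : ℕ) : ℂ) ≠ 0 := Nat.cast_ne_zero.2 (by omega)
    simp only [Chain.consEquiv_apply_coe, head_cons, coeff_cons]
    rw [show head m.1 + j + 1 - head m.1 = j + 1 by omega, Nat.add_sub_cancel, ← hd_def,
      pow_one, div_pow, inv_pow, pow_add]
    field_simp
    ring
  have hcz : c₀ - z = d * (1 - t / d) := by field_simp; ring
  rw [← Chain.consEquiv.tsum_eq, tsum_congr hterm, ← tsum_mul_tsum_of_summable_norm hgeo htail,
    tsum_mul_left, tsum_geometric_of_norm_lt_one hx, hcz, mul_inv]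

end Coeff

end PolyLi

open PolyLi in
theorem polyLi_hasDerivAt_general (S : Finset ℂ) (b : ℂ)
    (r : ℕ) (k : Fin r → ℕ)
    (cs : Fin r → ℂ) (hcsS : ∀ i, cs i ∈ S) (hcsb : ∀ i, cs i ≠ b)
    (c : ℂ) (hcS : c ∈ S) (hcb : c ≠ b) (z : ℂ)
    (hz : ∀ c' ∈ S, c' ≠ b → ‖z - b‖ < ‖c' - b‖) :
    HasDerivAt (polyLi b (r + 1) (Fin.cons 1 k) (Fin.cons c cs))
      ((z - c)⁻¹ * polyLi b r k cs z) z := by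
  have hzcs : ∀ i, ‖z - b‖ < ‖cs i - b‖ := fun i => hz _ (hcsS i) (hcsb i)
  have hzc : ‖z - b‖ < ‖c - b‖ := hz c hcS hcb
  convert hasDerivAt_polyLi b (Fin.cons 1 k) (Fin.cons c cs) (Fin.cases hzc hzcs) using 1
  rw [tsum_coeff_cons_mul_deriv b k cs c hzcs hzc, polyLi_eq_tsum, pow_succ,
    show c - z = -(z - c) by ring, inv_neg]
  ring

/-- The differential relation `d/dz Li_b(x_c w; z) = (1/(z−c)) Li_b(w; z)` for a
letter `c ∈ Σ \ {b}` and a word `w ∈ A^b` (encoded by the data `(k, cs)`), valid on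
the disc `|z−b| < min_{c'≠b} |c'−b|` minus the point `c`. Prepending the letter
`x_c` to `w` corresponds to the data `(Fin.cons 1 k, Fin.cons c cs)`. -/
theorem polyLi_hasDerivAt (S : Finset ℂ) (b : ℂ) (hb : b ∈ S)
    (r : ℕ) (k : Fin r → ℕ) (hk : ∀ i, 0 < k i)
    (cs : Fin r → ℂ) (hcsS : ∀ i, cs i ∈ S) (hcsb : ∀ i, cs i ≠ b)
    (c : ℂ) (hcS : c ∈ S) (hcb : c ≠ b) (z : ℂ)
    (hz : ∀ c' ∈ S, c' ≠ b → ‖z - b‖ < ‖c' - b‖)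
    (hzc : z ≠ c) :
    HasDerivAt (polyLi b (r + 1) (Fin.cons 1 k) (Fin.cons c cs))
      ((z - c)⁻¹ * polyLi b r k cs z) z :=
  polyLi_hasDerivAt_general S b r k cs hcsS hcsb c hcS hcb z hz
end

section
/- The shuffle relation for multiple polylogarithms: for any two words w₁, w₂ over the alphabet {x_c : c ∈ Σ} that do not end in x_b, Li_b(w₁; z) · Li_b(w₂; z) = Li_b(w₁ ⧢ w₂; z) for z in the disc |z−b| < min_{c≠b}|c−b| (Li extended linearly to linear combinations of words). -/
open scoped Classical

/-- Parse a word `x_b^{k₁−1} x_{c₁} ⋯ x_b^{k_r−1} x_{c_r}` (not ending in `x_b`)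
into its list of data `[(k₁, c₁), …, (k_r, c_r)]`. -/
noncomputable def parseWord (b : ℂ) : List ℂ → List (ℕ × ℂ)
  | [] => []
  | a :: t =>
    if a = b then
      match parseWord b t with
      | (k, c) :: rest => (k + 1, c) :: rest
      | [] => []
    else (1, a) :: parseWord b t

/-- The multiple polylogarithm attached to a word `w` (not ending in `x_b`):
for `w = x_b^{k₁−1}x_{c₁}⋯x_b^{k_r−1}x_{c_r}`,
`Li_b(w; z) = (−1)^r Σ_{m₁>⋯>m_r>0} ∏_i ((z−b)/(c_i−b))^{m_i−m_{i+1}}/m_i^{k_i}`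
(with `m_{r+1} = 0`), and `Li_b(1; z) = 1`. -/
noncomputable def listLi (b : ℂ) (w : List ℂ) (z : ℂ) : ℂ :=
  let L := parseWord b w
  (-1 : ℂ) ^ L.length *
    ∑' m : {f : Fin L.length → ℕ // StrictAnti f ∧ ∀ i, 0 < f i},
      ∏ i : Fin L.length,
        ((z - b) / ((L.get i).2 - b)) ^
            (m.1 i - (if h : (i : ℕ) + 1 < L.length then m.1 ⟨(i : ℕ) + 1, h⟩ else 0)) /
          ((m.1 i : ℂ)) ^ ((L.get i).1)

/-!
In the variable `X = z - b`, `Li_b(1) = 1` and `d/dX Li_b(x_a w) = Li_b(w) / (X - (a - b))` with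
zero constant term, which for `a = b` is division by `X`. These rules define `Li_b(w)` as a formal
power series, an iterated integral, and the shuffle relation holds formally by induction on the two
words: both sides vanish at `X = 0` and, by the Leibniz rule, have the same derivative. Writing the
summation index `m₁ > ⋯ > m_r > 0` through its gaps `m_i - m_{i+1} - 1`, the multiple series is
absolutely convergent on the disc and, grouped by the total degree `m₁`, it is the value of that
power series at `z - b`; the Cauchy product then turns the formal identity into the analytic one.
-/

open PowerSeries

section Shuffle

variable {α : Type*}

theorem sh_cons_cons (a c : α) (u v : List α) :
    sh (a :: u) (c :: v) = (sh u (c :: v)).map (a :: ·) + (sh (a :: u) v).map (c :: ·) := by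
  rw [sh]

theorem perm_append_of_mem_sh : ∀ {u v w : List α}, w ∈ sh u v → w.Perm (u ++ v)
  | [], v, w, hw => by simp_all [sh]
  | a :: u, [], w, hw => by simp_all [sh]
  | a :: u, c :: v, w, hw => by
    rw [sh_cons_cons, Multiset.mem_add, Multiset.mem_map, Multiset.mem_map] at hw
    rcases hw with ⟨s, hs, rfl⟩ | ⟨s, hs, rfl⟩
    · exact (perm_append_of_mem_sh hs).cons a
    · exact ((perm_append_of_mem_sh hs).cons c).trans List.perm_middle.symm
termination_by u v => u.length + v.length

theorem getLast?_ne_of_getLast?_cons_ne {a b : α} {u : List α} (h : (a :: u).getLast? ≠ some b) :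
    u.getLast? ≠ some b := by
  cases u <;> simp_all

theorem ne_nil_of_getLast?_cons_ne {a b : α} {u : List α} (h : (a :: u).getLast? ≠ some b)
    (ha : a = b) : u ≠ [] := by
  rintro rfl
  simp [ha] at h

theorem getLast?_cons_of_mem_sh {a : α} {u v w : List α} (huv : u ++ v ≠ []) (hw : w ∈ sh u v) :
    (a :: w).getLast? = w.getLast? := by
  have hne : w ≠ [] := by
    rintro rfl
    exact huv (List.nil_perm.mp (perm_append_of_mem_sh hw))
  obtain ⟨x, t, rfl⟩ := List.exists_cons_of_ne_nil hne
  exact List.getLast?_cons_cons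

theorem getLast?_ne_of_mem_sh {b : α} : ∀ {u v w : List α}, u.getLast? ≠ some b →
    v.getLast? ≠ some b → w ∈ sh u v → w.getLast? ≠ some b
  | [], v, w, _, hv, hw => by simp_all [sh]
  | a :: u, [], w, hu, _, hw => by simp_all [sh]
  | a :: u, c :: v, w, hu, hv, hw => by
    rw [sh_cons_cons, Multiset.mem_add, Multiset.mem_map, Multiset.mem_map] at hw
    rcases hw with ⟨s, hs, rfl⟩ | ⟨s, hs, rfl⟩
    · rw [getLast?_cons_of_mem_sh (by simp) hs]
      exact getLast?_ne_of_mem_sh (getLast?_ne_of_getLast?_cons_ne hu) hv hs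
    · rw [getLast?_cons_of_mem_sh (by simp) hs]
      exact getLast?_ne_of_mem_sh hu (getLast?_ne_of_getLast?_cons_ne hv) hs
termination_by u v => u.length + v.length

end Shuffle

namespace PowerSeries

variable {R K : Type*} [CommRing R] [Field K]

/-- At `n = 0` the division by zero makes the constant term `0`. -/
noncomputable def integ (F : K⟦X⟧) : K⟦X⟧ :=
  mk fun n => coeff (n - 1) F / n

@[simp] theorem coeff_integ (F : K⟦X⟧) (n : ℕ) : coeff n (integ F) = coeff (n - 1) F / n :=
  coeff_mk _ _

@[simp] theorem constantCoeff_integ (F : K⟦X⟧) : constantCoeff (integ F) = 0 := by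
  rw [← coeff_zero_eq_constantCoeff_apply, coeff_integ, Nat.cast_zero, div_zero]

theorem derivative_integ [CharZero K] (F : K⟦X⟧) : d⁄dX K (integ F) = F := by
  ext n
  rw [coeff_derivative, coeff_integ, Nat.add_sub_cancel, Nat.cast_succ,
    div_mul_cancel₀ _ (Nat.cast_add_one_ne_zero n)]

noncomputable def divX : R⟦X⟧ →ₗ[R] R⟦X⟧ where
  toFun F := mk fun n => coeff (n + 1) F
  map_add' F G := by ext; simp
  map_smul' c F := by ext; simp

@[simp] theorem coeff_divX (F : R⟦X⟧) (n : ℕ) : coeff n (divX F) = coeff (n + 1) F := by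
  simp [divX]

theorem divX_mul_of_constantCoeff_eq_zero {F : R⟦X⟧} (hF : constantCoeff F = 0) (G : R⟦X⟧) :
    divX (F * G) = divX F * G := by
  ext n
  rw [coeff_divX, coeff_mul, coeff_mul, Finset.Nat.antidiagonal_succ, Finset.sum_cons,
    Finset.sum_map, coeff_zero_eq_constantCoeff_apply, hF, zero_mul, zero_add]
  simp

theorem coeff_integ_divX (F : K⟦X⟧) (n : ℕ) : coeff n (integ (divX F)) = coeff n F / n := by
  cases n <;> simp

end PowerSeries

theorem HasSum.coeff_mul_pow {𝕜 : Type*} [RCLike 𝕜] {F G : 𝕜⟦X⟧} {x s t : 𝕜}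
    (hF : HasSum (fun n => coeff n F * x ^ n) s) (hG : HasSum (fun n => coeff n G * x ^ n) t) :
    HasSum (fun n => coeff n (F * G) * x ^ n) (s * t) := by
  have h := hasSum_sum_range_mul_of_summable_norm
    (summable_norm_iff (f := fun n => coeff n F * x ^ n) |>.2 hF.summable)
    (summable_norm_iff (f := fun n => coeff n G * x ^ n) |>.2 hG.summable)
  rw [hF.tsum_eq, hG.tsum_eq] at h
  refine h.congr_fun fun n => ?_
  rw [coeff_mul, Finset.Nat.sum_antidiagonal_eq_sum_range_succ (fun i j => coeff i F * coeff j G),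
    Finset.sum_mul]
  refine Finset.sum_congr rfl fun k hk => ?_
  rw [← pow_mul_pow_sub x (Nat.lt_succ_iff.1 (Finset.mem_range.1 hk))]
  ring

theorem hasSum_coeff_multiset_sum_mul_pow {R ι : Type*} [CommSemiring R] [TopologicalSpace R]
    [ContinuousAdd R] {M : Multiset ι} {F : ι → R⟦X⟧} {a : ι → R} {x : R}
    (h : ∀ i ∈ M, HasSum (fun n => coeff n (F i) * x ^ n) (a i)) :
    HasSum (fun n => coeff n (M.map F).sum * x ^ n) (M.map a).sum := by
  induction M using Multiset.induction with
  | empty => simp [hasSum_zero]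
  | cons i M ih =>
    simp only [Multiset.map_cons, Multiset.sum_cons, map_add, add_mul]
    exact (h i (Multiset.mem_cons_self _ _)).add (ih fun j hj => h j (Multiset.mem_cons_of_mem hj))

theorem summable_prod_pi_of_nonneg : ∀ {r : ℕ} {f : Fin r → ℕ → ℝ}, (∀ i n, 0 ≤ f i n) →
    (∀ i, Summable (f i)) → Summable fun d : Fin r → ℕ => ∏ i, f i (d i)
  | 0, _, _, _ => Summable.of_finite
  | r + 1, f, hf, hs => by
    rw [← (Fin.consEquiv fun _ => ℕ).summable_iff]
    have ih := summable_prod_pi_of_nonneg (fun i => hf i.succ) fun i => hs i.succ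
    have hprod := (hs 0).mul_of_nonneg ih (hf 0) fun d =>
      Finset.prod_nonneg fun i _ => hf i.succ (d i)
    exact hprod.congr fun p => by simp [Fin.prod_univ_succ, Fin.consEquiv]

section Parse

variable {b : ℂ}

theorem parseWord_cons_of_ne {a : ℂ} (h : a ≠ b) (w : List ℂ) :
    parseWord b (a :: w) = (1, a) :: parseWord b w := by
  simp [parseWord, h]

theorem parseWord_cons_self {w : List ℂ} {k : ℕ} {c : ℂ} {L : List (ℕ × ℂ)}
    (hw : parseWord b w = (k, c) :: L) : parseWord b (b :: w) = (k + 1, c) :: L := by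
  simp [parseWord, hw]

theorem exists_parseWord_eq_cons : ∀ {w : List ℂ}, w ≠ [] → w.getLast? ≠ some b →
    ∃ k c L, parseWord b w = (k, c) :: L
  | [], hw, _ => absurd rfl hw
  | a :: w, _, hlast => by
    by_cases ha : a = b
    · obtain ⟨k, c, L, hL⟩ := exists_parseWord_eq_cons (ne_nil_of_getLast?_cons_ne hlast ha)
        (getLast?_ne_of_getLast?_cons_ne hlast)
      exact ⟨k + 1, c, L, by rw [ha]; exact parseWord_cons_self hL⟩
    · exact ⟨1, a, _, parseWord_cons_of_ne ha w⟩

theorem map_snd_parseWord (b : ℂ) : ∀ w : List ℂ, (parseWord b w).map Prod.snd = w.filter (· ≠ b)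
  | [] => rfl
  | a :: w => by
    have ih := map_snd_parseWord b w
    by_cases ha : a = b
    · rcases hL : parseWord b w with _ | ⟨⟨k, c⟩, L⟩
      · simp only [parseWord, ha, hL, if_true, List.map_nil] at ih ⊢
        simpa [ha] using ih
      · simp only [parseWord, ha, hL, if_true, List.map_cons] at ih ⊢
        simpa [ha] using ih
    · simp [parseWord_cons_of_ne ha, ih, ha]

theorem mem_parseWord {w : List ℂ} {p : ℕ × ℂ} (hp : p ∈ parseWord b w) : p.2 ∈ w ∧ p.2 ≠ b := by
  simpa [map_snd_parseWord] using List.mem_map_of_mem (f := Prod.snd) hp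

end Parse

namespace MultiplePolylog

section LetterSeries

variable {K : Type*} [Field K]

/-- The letter `x_a` acts as division by `z - a = X - (a - b)`; as `invUnitsSub u = 1 / (u - X)`,
that is multiplication by `-invUnitsSub (a - b)`. -/
noncomputable def letterOp (b a : K) : K⟦X⟧ →ₗ[K] K⟦X⟧ :=
  if h : a = b then divX
  else LinearMap.mulLeft K (-invUnitsSub (Units.mk0 (a - b) (sub_ne_zero.2 h)))

theorem letterOp_self (b : K) : letterOp b b = divX := dif_pos rfl

theorem letterOp_of_ne {b a : K} (h : a ≠ b) : letterOp b a =
    LinearMap.mulLeft K (-invUnitsSub (Units.mk0 (a - b) (sub_ne_zero.2 h))) := dif_neg h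

theorem letterOp_mul_left {b a : K} {F : K⟦X⟧} (hF : a = b → constantCoeff F = 0) (G : K⟦X⟧) :
    letterOp b a (F * G) = letterOp b a F * G := by
  unfold letterOp
  split_ifs with h
  · exact divX_mul_of_constantCoeff_eq_zero (hF h) G
  · simp only [LinearMap.mulLeft_apply, mul_assoc]

theorem letterOp_mul_right {b a : K} (F : K⟦X⟧) {G : K⟦X⟧} (hG : a = b → constantCoeff G = 0) :
    letterOp b a (F * G) = F * letterOp b a G := by
  rw [mul_comm, letterOp_mul_left hG, mul_comm]

noncomputable def liSeries (b : K) : List K → K⟦X⟧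
  | [] => 1
  | a :: w => integ (letterOp b a (liSeries b w))

@[simp] theorem liSeries_nil (b : K) : liSeries b [] = 1 := rfl

theorem liSeries_cons (b a : K) (w : List K) :
    liSeries b (a :: w) = integ (letterOp b a (liSeries b w)) := rfl

theorem constantCoeff_liSeries_cons (b a : K) (w : List K) :
    constantCoeff (liSeries b (a :: w)) = 0 :=
  constantCoeff_integ _

theorem derivative_liSeries_cons [CharZero K] (b a : K) (w : List K) :
    d⁄dX K (liSeries b (a :: w)) = letterOp b a (liSeries b w) :=
  derivative_integ _

theorem coeff_liSeries_cons_self (b : K) (w : List K) (n : ℕ) :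
    coeff n (liSeries b (b :: w)) = coeff n (liSeries b w) / n := by
  rw [liSeries_cons, letterOp_self, coeff_integ_divX]

theorem coeff_liSeries_cons_of_ne {b a : K} (h : a ≠ b) (w : List K) (n : ℕ) :
    coeff (n + 1) (liSeries b (a :: w)) =
      -(∑ x ∈ Finset.range (n + 1), (a - b)⁻¹ ^ (x + 1) * coeff (n - x) (liSeries b w)) /
        (n + 1) := by
  rw [liSeries_cons, letterOp_of_ne h, coeff_integ, Nat.add_sub_cancel, LinearMap.mulLeft_apply,
    coeff_mul, Finset.Nat.sum_antidiagonal_eq_sum_range_succ (fun i j => coeff i _ * coeff j _),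
    Nat.cast_succ, ← Finset.sum_neg_distrib]
  congr 1
  refine Finset.sum_congr rfl fun x _ => ?_
  rw [map_neg, coeff_invUnitsSub, one_divp, Units.val_inv_eq_inv_val, Units.val_pow_eq_pow_val,
    Units.val_mk0, inv_pow, neg_mul]

theorem constantCoeff_liSeries_of_getLast?_cons_ne {b a : K} {w : List K}
    (hw : (a :: w).getLast? ≠ some b) (ha : a = b) : constantCoeff (liSeries b w) = 0 := by
  obtain ⟨c, w, rfl⟩ := List.exists_cons_of_ne_nil (ne_nil_of_getLast?_cons_ne hw ha)
  exact constantCoeff_liSeries_cons b c w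

theorem liSeries_mul [CharZero K] (b : K) : ∀ u v : List K, u.getLast? ≠ some b →
    v.getLast? ≠ some b → liSeries b u * liSeries b v = ((sh u v).map (liSeries b)).sum
  | [], v, _, _ => by simp [sh]
  | a :: u, [], _, _ => by simp [sh]
  | a :: u, c :: v, hu, hv => by
    have ihl := liSeries_mul b u (c :: v) (getLast?_ne_of_getLast?_cons_ne hu) hv
    have ihr := liSeries_mul b (a :: u) v hu (getLast?_ne_of_getLast?_cons_ne hv)
    have hderiv (s : Multiset (List K)) (e : K) :
        d⁄dX K ((s.map (e :: ·)).map (liSeries b)).sum = letterOp b e (s.map (liSeries b)).sum := by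
      simp [map_multiset_sum, Multiset.map_map, derivative_liSeries_cons]
    refine derivative.ext ?_ ?_
    · calc d⁄dX K (liSeries b (a :: u) * liSeries b (c :: v))
          = letterOp b a (liSeries b u) * liSeries b (c :: v) +
              liSeries b (a :: u) * letterOp b c (liSeries b v) := by
            rw [Derivation.leibniz, smul_eq_mul, smul_eq_mul, derivative_liSeries_cons,
              derivative_liSeries_cons, add_comm, mul_comm (liSeries b (c :: v))]
        _ = letterOp b a (liSeries b u * liSeries b (c :: v)) +
              letterOp b c (liSeries b (a :: u) * liSeries b v) := by
            rw [letterOp_mul_left (constantCoeff_liSeries_of_getLast?_cons_ne hu),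
              letterOp_mul_right _ (constantCoeff_liSeries_of_getLast?_cons_ne hv)]
        _ = d⁄dX K ((sh (a :: u) (c :: v)).map (liSeries b)).sum := by
            rw [sh_cons_cons, Multiset.map_add, Multiset.sum_add, map_add, hderiv, hderiv, ihl, ihr]
    · simp [sh_cons_cons, map_multiset_sum, Multiset.map_map,
        constantCoeff_liSeries_cons]

end LetterSeries

section Gaps

variable {r : ℕ}

/-- `f (i + 1)`, with the convention `f r = 0` of `listLi`. -/
def nextVal (f : Fin r → ℕ) (i : Fin r) : ℕ :=
  if h : (i : ℕ) + 1 < r then f ⟨i + 1, h⟩ else 0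

def weight (d : Fin r → ℕ) : ℕ :=
  ∑ i, (d i + 1)

def tailWeight (d : Fin r → ℕ) (i : Fin r) : ℕ :=
  ∑ j ∈ Finset.Ici i, (d j + 1)

theorem tailWeight_eq_add_nextVal (d : Fin r → ℕ) (i : Fin r) :
    tailWeight d i = d i + 1 + nextVal (tailWeight d) i := by
  rw [tailWeight, Finset.Ici_eq_cons_Ioi, Finset.sum_cons, nextVal]
  split_ifs with h
  · have hIoi : Finset.Ioi i = Finset.Ici ⟨i + 1, h⟩ := by
      ext j
      simp only [Finset.mem_Ioi, Finset.mem_Ici, Fin.lt_def, Fin.le_def]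
      omega
    rw [hIoi, tailWeight]
  · have hIoi : Finset.Ioi i = ∅ := by
      ext j
      simp only [Finset.mem_Ioi, Fin.lt_def, Finset.notMem_empty, iff_false]
      omega
    rw [hIoi, Finset.sum_empty]

theorem tailWeight_pos (d : Fin r → ℕ) (i : Fin r) : 0 < tailWeight d i := by
  rw [tailWeight_eq_add_nextVal]
  omega

theorem tailWeight_strictAnti (d : Fin r → ℕ) : StrictAnti (tailWeight d) := fun _ _ hij =>
  Finset.sum_lt_sum_of_subset (Finset.Ici_subset_Ici.2 hij.le) (Finset.mem_Ici.2 le_rfl)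
    (fun h => (Finset.mem_Ici.1 h).not_gt hij) (Nat.succ_pos _) fun _ _ _ => Nat.zero_le _

theorem tailWeight_cons_zero (x : ℕ) (d : Fin r → ℕ) :
    tailWeight (Fin.cons x d : Fin (r + 1) → ℕ) 0 = x + 1 + weight d := by
  rw [tailWeight, ← bot_eq_zero, Finset.Ici_bot, Fin.sum_univ_succ]
  rfl

theorem tailWeight_cons_succ (x : ℕ) (d : Fin r → ℕ) (i : Fin r) :
    tailWeight (Fin.cons x d : Fin (r + 1) → ℕ) i.succ = tailWeight d i := by
  rw [tailWeight, ← Fin.map_succEmb_Ici, Finset.sum_map]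
  rfl

theorem nextVal_lt {f : Fin r → ℕ} (hf : StrictAnti f) (hpos : ∀ i, 0 < f i) (i : Fin r) :
    nextVal f i < f i := by
  unfold nextVal
  split_ifs with h
  · exact hf (Fin.lt_def.2 (Nat.lt_succ_self _))
  · exact hpos i

theorem eq_of_forall_eq_add_nextVal {c f g : Fin r → ℕ} (hf : ∀ i, f i = c i + nextVal f i)
    (hg : ∀ i, g i = c i + nextVal g i) (i : Fin r) : f i = g i := by
  rw [hf, hg, nextVal, nextVal]
  split_ifs with h
  · rw [eq_of_forall_eq_add_nextVal hf hg ⟨i + 1, h⟩]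
  · rfl
termination_by r - i

def gapEquiv (r : ℕ) : (Fin r → ℕ) ≃ {f : Fin r → ℕ // StrictAnti f ∧ ∀ i, 0 < f i} where
  toFun d := ⟨tailWeight d, tailWeight_strictAnti d, tailWeight_pos d⟩
  invFun f i := f.1 i - nextVal f.1 i - 1
  left_inv d := funext fun i => by
    have := tailWeight_eq_add_nextVal d i
    dsimp only
    omega
  right_inv f := Subtype.ext <| funext <|
    eq_of_forall_eq_add_nextVal (tailWeight_eq_add_nextVal _) fun i => by
      have := nextVal_lt f.2.1 f.2.2 i
      dsimp only
      omega

theorem gapEquiv_sub_nextVal (d : Fin r → ℕ) (i : Fin r) :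
    (gapEquiv r d).1 i - nextVal (gapEquiv r d).1 i = d i + 1 := by
  have := tailWeight_eq_add_nextVal d i
  simp only [gapEquiv, Equiv.coe_fn_mk]
  omega

theorem weight_cons (x : ℕ) (d : Fin r → ℕ) :
    weight (Fin.cons x d : Fin (r + 1) → ℕ) = x + 1 + weight d := by
  rw [weight, Fin.sum_univ_succ]
  rfl

theorem le_weight (d : Fin r → ℕ) (i : Fin r) : d i + 1 ≤ weight d :=
  Finset.single_le_sum (f := fun j => d j + 1) (fun _ _ => Nat.zero_le _) (Finset.mem_univ i)

def weightFiber (r n : ℕ) : Finset (Fin r → ℕ) :=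
  {d ∈ Fintype.piFinset fun _ => Finset.range n | weight d = n}

@[simp] theorem mem_weightFiber {n : ℕ} {d : Fin r → ℕ} : d ∈ weightFiber r n ↔ weight d = n := by
  refine Finset.mem_filter.trans ⟨And.right, fun hw => ⟨Fintype.mem_piFinset.2 fun i => ?_, hw⟩⟩
  have := le_weight d i
  rw [Finset.mem_range]
  omega

theorem coe_weightFiber (r n : ℕ) : (weightFiber r n : Set (Fin r → ℕ)) = weight ⁻¹' {n} := by
  ext d
  simp

theorem sum_weightFiber_succ {M : Type*} [AddCommMonoid M] (g : (Fin (r + 1) → ℕ) → M) (n : ℕ) :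
    ∑ d ∈ weightFiber (r + 1) (n + 1), g d =
      ∑ x ∈ Finset.range (n + 1), ∑ d ∈ weightFiber r (n - x), g (Fin.cons x d) := by
  rw [Finset.sum_sigma']
  refine (Finset.sum_equiv ((Equiv.sigmaEquivProd ℕ _).trans (Fin.consEquiv fun _ => ℕ))
    (fun q => ?_) fun _ _ => rfl).symm
  rw [Finset.mem_sigma, Finset.mem_range, mem_weightFiber, mem_weightFiber]
  change _ ↔ weight (Fin.cons q.1 q.2 : Fin (r + 1) → ℕ) = n + 1
  rw [weight_cons]
  omega

end Gaps

section Coefficients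

variable (b : ℂ)

/-- The summand of `listLi` for the parsed word `L`, indexed by the gaps `d` of `m`. -/
noncomputable def gapTerm (z : ℂ) (L : List (ℕ × ℂ)) (d : Fin L.length → ℕ) : ℂ :=
  ∏ i, ((z - b) / ((L.get i).2 - b)) ^ (d i + 1) / (tailWeight d i : ℂ) ^ (L.get i).1

noncomputable def gapCoeff (L : List (ℕ × ℂ)) (d : Fin L.length → ℕ) : ℂ :=
  ∏ i, ((L.get i).2 - b)⁻¹ ^ (d i + 1) / (tailWeight d i : ℂ) ^ (L.get i).1

noncomputable def liCoeff (L : List (ℕ × ℂ)) (n : ℕ) : ℂ :=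
  ∑ d ∈ weightFiber L.length n, gapCoeff b L d

theorem listLi_eq_tsum_gapTerm (z : ℂ) (w : List ℂ) :
    listLi b w z = (-1) ^ (parseWord b w).length * ∑' d, gapTerm b z (parseWord b w) d := by
  rw [listLi, ← (gapEquiv _).tsum_eq]
  congr 1
  refine tsum_congr fun d => Finset.prod_congr rfl fun i _ => ?_
  exact congrArg₂ _ (congrArg _ (gapEquiv_sub_nextVal d i)) rfl

theorem gapTerm_eq (z : ℂ) (L : List (ℕ × ℂ)) (d : Fin L.length → ℕ) :
    gapTerm b z L d = (z - b) ^ weight d * gapCoeff b L d := by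
  rw [gapTerm, gapCoeff, weight, ← Finset.prod_pow_eq_pow_sum, ← Finset.prod_mul_distrib]
  refine Finset.prod_congr rfl fun i _ => ?_
  rw [div_eq_mul_inv (z - b), mul_pow, mul_div_assoc]

theorem norm_gapTerm_le (z : ℂ) (L : List (ℕ × ℂ)) (d : Fin L.length → ℕ) :
    ‖gapTerm b z L d‖ ≤ ∏ i, ‖(z - b) / ((L.get i).2 - b)‖ ^ (d i + 1) := by
  rw [gapTerm, norm_prod]
  refine Finset.prod_le_prod (fun _ _ => norm_nonneg _) fun i _ => ?_
  rw [norm_div, norm_pow, norm_pow, Complex.norm_natCast]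
  exact div_le_self (by positivity) (one_le_pow₀ (by exact_mod_cast tailWeight_pos d i))

theorem summable_gapTerm {z : ℂ} {L : List (ℕ × ℂ)} (hz : ∀ p ∈ L, ‖z - b‖ < ‖p.2 - b‖) :
    Summable (gapTerm b z L) := by
  refine Summable.of_norm_bounded (summable_prod_pi_of_nonneg
    (f := fun i n => ‖(z - b) / ((L.get i).2 - b)‖ ^ (n + 1)) (fun _ _ => by positivity)
    fun i => ?_) (norm_gapTerm_le b z L)
  have hlt : ‖(z - b) / ((L.get i).2 - b)‖ < 1 := by
    have h := hz _ (List.get_mem L i)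
    rw [norm_div]
    exact (div_lt_one ((norm_nonneg _).trans_lt h)).2 h
  simpa [pow_succ] using (summable_geometric_of_lt_one (norm_nonneg _) hlt).mul_right _

theorem hasSum_liCoeff {z : ℂ} {L : List (ℕ × ℂ)} (hz : ∀ p ∈ L, ‖z - b‖ < ‖p.2 - b‖) :
    HasSum (fun n => liCoeff b L n * (z - b) ^ n) (∑' d, gapTerm b z L d) := by
  refine ((summable_gapTerm b hz).hasSum.tsum_fiberwise weight).congr_fun fun n => ?_
  rw [← coe_weightFiber, Finset.tsum_subtype', liCoeff, Finset.sum_mul]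
  refine Finset.sum_congr rfl fun d hd => ?_
  rw [gapTerm_eq, mem_weightFiber.1 hd, mul_comm]

theorem gapCoeff_cons (k : ℕ) (c : ℂ) (L : List (ℕ × ℂ)) (x : ℕ) (d : Fin L.length → ℕ) :
    gapCoeff b ((k, c) :: L) (Fin.cons x d : Fin (L.length + 1) → ℕ) =
      (c - b)⁻¹ ^ (x + 1) / ((x + 1 + weight d : ℕ) : ℂ) ^ k * gapCoeff b L d := by
  simp only [gapCoeff, List.length_cons, Fin.prod_univ_succ, Fin.cons_zero, Fin.cons_succ,
    tailWeight_cons_zero, tailWeight_cons_succ, List.get_cons_zero]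
  rfl

theorem liCoeff_nil (n : ℕ) : liCoeff b [] n = coeff n (1 : ℂ⟦X⟧) := by
  rcases n with _ | n
  · simp [liCoeff, weightFiber, weight, gapCoeff]
  · simp [liCoeff, weightFiber, weight, gapCoeff, coeff_one]

theorem liCoeff_cons_zero (p : ℕ × ℂ) (L : List (ℕ × ℂ)) : liCoeff b (p :: L) 0 = 0 := by
  refine Finset.sum_eq_zero fun d hd => absurd (mem_weightFiber.1 hd) ?_
  have := le_weight d ⟨0, Nat.succ_pos _⟩
  omega

theorem liCoeff_succ_fst (k : ℕ) (c : ℂ) (L : List (ℕ × ℂ)) (n : ℕ) :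
    liCoeff b ((k + 1, c) :: L) n = liCoeff b ((k, c) :: L) n / n := by
  rw [liCoeff, liCoeff, Finset.sum_div]
  refine Finset.sum_congr rfl fun d hd => ?_
  rw [← mem_weightFiber.1 hd, ← Fin.cons_self_tail d, gapCoeff_cons, gapCoeff_cons, weight_cons,
    pow_succ]
  ring

theorem liCoeff_one_cons (c : ℂ) (L : List (ℕ × ℂ)) (n : ℕ) :
    liCoeff b ((1, c) :: L) (n + 1) =
      (∑ x ∈ Finset.range (n + 1), (c - b)⁻¹ ^ (x + 1) * liCoeff b L (n - x)) / (n + 1) := by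
  rw [liCoeff, Finset.sum_div]
  refine (sum_weightFiber_succ (r := L.length) (gapCoeff b ((1, c) :: L)) n).trans
    (Finset.sum_congr rfl fun x hx => ?_)
  rw [liCoeff, Finset.mul_sum, Finset.sum_div]
  refine Finset.sum_congr rfl fun d hd => ?_
  have hw : x + 1 + weight d = n + 1 := by
    rw [mem_weightFiber.1 hd]
    have := Finset.mem_range.1 hx
    omega
  rw [gapCoeff_cons, hw, pow_one, Nat.cast_succ]
  ring

end Coefficients

theorem coeff_liSeries (b : ℂ) : ∀ {w : List ℂ}, w.getLast? ≠ some b → ∀ n,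
    coeff n (liSeries b w) = (-1) ^ (parseWord b w).length * liCoeff b (parseWord b w) n
  | [], _, n => by simp [parseWord, liCoeff_nil]
  | a :: w, hw, n => by
    have ih := coeff_liSeries b (getLast?_ne_of_getLast?_cons_ne hw)
    by_cases ha : a = b
    · subst ha
      obtain ⟨k, c, L, hL⟩ := exists_parseWord_eq_cons (ne_nil_of_getLast?_cons_ne hw rfl)
        (getLast?_ne_of_getLast?_cons_ne hw)
      rw [coeff_liSeries_cons_self, ih, parseWord_cons_self hL, hL, liCoeff_succ_fst,
        List.length_cons, List.length_cons, mul_div_assoc]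
    · rw [parseWord_cons_of_ne ha, List.length_cons]
      rcases n with _ | n
      · simp [liSeries_cons, liCoeff_cons_zero]
      simp only [coeff_liSeries_cons_of_ne ha, liCoeff_one_cons, ih, mul_left_comm _ ((-1 : ℂ) ^ _),
        ← Finset.mul_sum]
      ring

theorem hasSum_liSeries {b z : ℂ} {w : List ℂ} (hw : w.getLast? ≠ some b)
    (hz : ∀ c ∈ w, c ≠ b → ‖z - b‖ < ‖c - b‖) :
    HasSum (fun n => coeff n (liSeries b w) * (z - b) ^ n) (listLi b w z) := by
  have hL (p : ℕ × ℂ) (hp : p ∈ parseWord b w) : ‖z - b‖ < ‖p.2 - b‖ :=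
    hz _ (mem_parseWord hp).1 (mem_parseWord hp).2
  rw [listLi_eq_tsum_gapTerm]
  simp_rw [coeff_liSeries b hw, mul_assoc]
  exact (hasSum_liCoeff b hL).mul_left _

end MultiplePolylog

theorem listLi_shuffle_general (S : Finset ℂ) (b : ℂ)
    (w₁ w₂ : List ℂ) (hw₁S : ∀ x ∈ w₁, x ∈ S) (hw₂S : ∀ x ∈ w₂, x ∈ S)
    (hw₁ : w₁.getLast? ≠ some b) (hw₂ : w₂.getLast? ≠ some b) (z : ℂ)
    (hz : ∀ c ∈ S, c ≠ b → ‖z - b‖ < ‖c - b‖) :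
    listLi b w₁ z * listLi b w₂ z = ((sh w₁ w₂).map fun w => listLi b w z).sum := by
  have hS {w : List ℂ} (hwS : ∀ x ∈ w, x ∈ S) (hw : w.getLast? ≠ some b) :
      HasSum (fun n => coeff n (MultiplePolylog.liSeries b w) * (z - b) ^ n) (listLi b w z) :=
    MultiplePolylog.hasSum_liSeries hw fun c hc => hz c (hwS c hc)
  have hprod := (hS hw₁S hw₁).coeff_mul_pow (hS hw₂S hw₂)
  rw [MultiplePolylog.liSeries_mul b w₁ w₂ hw₁ hw₂] at hprod
  refine hprod.unique (hasSum_coeff_multiset_sum_mul_pow fun w hw =>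
    hS (fun x hx => ?_) (getLast?_ne_of_mem_sh hw₁ hw₂ hw))
  rcases List.mem_append.1 ((perm_append_of_mem_sh hw).subset hx) with h | h
  exacts [hw₁S x h, hw₂S x h]

/-- The shuffle relation for multiple polylogarithms: for words `w₁, w₂` over the
alphabet `Σ` not ending in `x_b`, and `z` in the disc `|z−b| < min_{c≠b}|c−b|`,
`Li_b(w₁; z) · Li_b(w₂; z) = Li_b(w₁ ⧢ w₂; z)`, where `Li_b` is extended linearly
(here: summed over the multiset of shuffles). -/
theorem listLi_shuffle (S : Finset ℂ) (b : ℂ) (hb : b ∈ S)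
    (w₁ w₂ : List ℂ) (hw₁S : ∀ x ∈ w₁, x ∈ S) (hw₂S : ∀ x ∈ w₂, x ∈ S)
    (hw₁ : w₁.getLast? ≠ some b) (hw₂ : w₂.getLast? ≠ some b) (z : ℂ)
    (hz : ∀ c ∈ S, c ≠ b → ‖z - b‖ < ‖c - b‖) :
    listLi b w₁ z * listLi b w₂ z = ((sh w₁ w₂).map fun w => listLi b w z).sum :=
  listLi_shuffle_general S b w₁ w₂ hw₁S hw₂S hw₁ hw₂ z hz
end
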